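/- arXiv:1609.02873 — 6 statements merged into one kernel-verified Lean document; each statement's English description precedes it below -/
import Mathlib

section
/- Let G be an ample Hausdorff groupoid and U ⊆ G⁽⁰⁾ an open subset. If U is invariant (for all γ ∈ G, r(γ) ∈ U iff s(γ) ∈ U), then A_R(G|_U) = A_R(G)·A_R(U) = A_R(U)·A_R(G), and consequently A_R(G|_U) is a two-sided ideal in A_R(G). -/
open TopologicalSpace

/-- A groupoid structure on a type `G`: every element is an arrow, with source and
range maps landing in the units, a (partial, defaulted) multiplication defined on
composable pairs, and inversion. -/
structure DGroupoid (G : Type*) where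
  src : G → G
  rng : G → G
  mul : G → G → G
  inv : G → G
  src_src : ∀ a, src (src a) = src a
  rng_src : ∀ a, rng (src a) = src a
  src_rng : ∀ a, src (rng a) = rng a
  rng_rng : ∀ a, rng (rng a) = rng a
  src_mul : ∀ a b, src a = rng b → src (mul a b) = src b
  rng_mul : ∀ a b, src a = rng b → rng (mul a b) = rng a
  mul_assoc : ∀ a b c, src a = rng b → src b = rng c →
    mul (mul a b) c = mul a (mul b c)
  mul_src : ∀ a, mul a (src a) = a
  rng_mul_self : ∀ a, mul (rng a) a = a
  src_inv : ∀ a, src (inv a) = rng a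
  rng_inv : ∀ a, rng (inv a) = src a
  mul_inv : ∀ a, mul a (inv a) = rng a
  inv_mul : ∀ a, mul (inv a) a = src a

namespace DGroupoid

variable {G : Type*} [TopologicalSpace G] (gr : DGroupoid G)

/-- The unit space `G⁽⁰⁾`. -/
def unitSpace : Set G := {x | gr.src x = x}

/-- The set of composable pairs `G⁽²⁾`. -/
def composable : Set (G × G) := {p | gr.src p.1 = gr.rng p.2}

/-- The range map viewed as a map `G → G⁽⁰⁾`. -/
def rngTo (γ : G) : gr.unitSpace := ⟨gr.rng γ, gr.src_rng γ⟩

/-- A topological groupoid: all structure maps are continuous. -/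
structure IsTopological : Prop where
  continuous_src : Continuous gr.src
  continuous_rng : Continuous gr.rng
  continuous_inv : Continuous gr.inv
  continuous_mul : ContinuousOn (fun p : G × G => gr.mul p.1 p.2) gr.composable

/-- An étale groupoid: a topological groupoid whose unit space is locally compact
Hausdorff in the relative topology and whose range map is a local homeomorphism
onto the unit space. -/
structure IsEtale : Prop where
  toIsTopological : gr.IsTopological
  locallyCompactUnits : LocallyCompactSpace gr.unitSpace
  t2Units : T2Space gr.unitSpace
  localHomeoRng : IsLocalHomeomorph gr.rngTo

/-- An ample groupoid: an étale groupoid whose unit space is zero-dimensional,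
i.e. has a basis of clopen sets. -/
structure IsAmple : Prop where
  toIsEtale : gr.IsEtale
  zeroDimUnits : IsTopologicalBasis {s : Set gr.unitSpace | IsClopen s}

/-- A bisection: a subset on which both the range and the source maps are injective. -/
def IsBisection (U : Set G) : Prop := Set.InjOn gr.rng U ∧ Set.InjOn gr.src U

/-- The isotropy group bundle `Iso(G)`. -/
def iso : Set G := {γ | gr.rng γ = gr.src γ}

variable (R : Type*) [CommRing R]

/-- Membership in the Steinberg algebra `A_R(G)`: locally constant, compactly
supported `R`-valued functions on `G`. -/
def InSteinberg (f : G → R) : Prop := IsLocallyConstant f ∧ HasCompactSupport f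

/-- The convolution product on `A_R(G)`:
`(f * g)(γ) = ∑_{γ₁γ₂ = γ} f(γ₁)g(γ₂)`. -/
noncomputable def conv (f g : G → R) : G → R := fun γ =>
  ∑ᶠ p ∈ {p : G × G | gr.src p.1 = gr.rng p.2 ∧ gr.mul p.1 p.2 = γ}, f p.1 * g p.2

end DGroupoid
section Aux

variable {G : Type*} (gr : DGroupoid G)

theorem aux_unit_rng {x : G} (hx : x ∈ gr.unitSpace) : gr.rng x = x := by
  have : gr.rng (gr.src x) = gr.src x := gr.rng_src x
  rwa [hx] at this

theorem aux_inv_inv (a : G) : gr.inv (gr.inv a) = a := by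
  set b := gr.inv a with hb
  calc gr.inv b = gr.mul (gr.inv b) (gr.src (gr.inv b)) := (gr.mul_src _).symm
    _ = gr.mul (gr.inv b) (gr.mul b a) := by
        rw [gr.src_inv, hb, gr.rng_inv, ← gr.inv_mul a]
    _ = gr.mul (gr.mul (gr.inv b) b) a :=
        (gr.mul_assoc _ _ _ (gr.src_inv b) (by rw [hb, gr.src_inv])).symm
    _ = gr.mul (gr.rng a) a := by rw [gr.inv_mul, hb, gr.src_inv]
    _ = a := gr.rng_mul_self a

theorem aux_cancel_left {a b c : G} (h1 : gr.src a = gr.rng b) (h2 : gr.src a = gr.rng c)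
    (h : gr.mul a b = gr.mul a c) : b = c := by
  have e : ∀ x : G, gr.src a = gr.rng x → gr.mul (gr.inv a) (gr.mul a x) = x := by
    intro x hx
    rw [← gr.mul_assoc _ _ _ (by rw [gr.src_inv]) hx, gr.inv_mul, hx, gr.rng_mul_self]
  rw [← e b h1, ← e c h2, h]

theorem aux_eq_mul_inv {a b γ : G} (h1 : gr.src a = gr.rng b) (h : gr.mul a b = γ) :
    a = gr.mul γ (gr.inv b) := by
  have : gr.mul (gr.mul a b) (gr.inv b) = a := by
    rw [gr.mul_assoc _ _ _ h1 (gr.rng_inv b).symm, gr.mul_inv, ← h1, gr.mul_src]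
  rw [← h, this]

end Aux
section ConvEval

variable {G R : Type*} [TopologicalSpace G] [CommRing R] (gr : DGroupoid G)

theorem aux_conv_eval_unique (f g : G → R) (γ : G) (p0 : G × G)
    (h1 : gr.src p0.1 = gr.rng p0.2) (h2 : gr.mul p0.1 p0.2 = γ)
    (huniq : ∀ p : G × G, gr.src p.1 = gr.rng p.2 → gr.mul p.1 p.2 = γ →
      f p.1 * g p.2 ≠ 0 → p = p0) :
    gr.conv R f g γ = f p0.1 * g p0.2 := by
  show (∑ᶠ p ∈ {p : G × G | gr.src p.1 = gr.rng p.2 ∧ gr.mul p.1 p.2 = γ}, f p.1 * g p.2)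
      = f p0.1 * g p0.2
  rw [finsum_mem_inter_support_eq _ _ ({p0} : Set (G × G))]
  · exact finsum_mem_singleton
  · ext p
    constructor
    · rintro ⟨⟨hc, hm⟩, hs⟩
      exact ⟨huniq p hc hm hs, hs⟩
    · rintro ⟨hp, hs⟩
      rcases hp with rfl
      exact ⟨⟨h1, h2⟩, hs⟩

theorem aux_conv_eval_zero (f g : G → R) (γ : G)
    (h : ∀ p : G × G, gr.src p.1 = gr.rng p.2 → gr.mul p.1 p.2 = γ → f p.1 * g p.2 = 0) :
    gr.conv R f g γ = 0 :=
  finsum_mem_eq_zero_of_forall_eq_zero fun p hp => h p hp.1 hp.2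

end ConvEval
section Topology

open Set Function

variable {G : Type*} [TopologicalSpace G] [T2Space G] {gr : DGroupoid G} (ha : gr.IsAmple)
include ha

theorem aux_continuous_rng : Continuous gr.rng := ha.toIsEtale.toIsTopological.continuous_rng

theorem aux_continuous_rngTo : Continuous gr.rngTo :=
  Continuous.subtype_mk (aux_continuous_rng ha) _

theorem aux_unitSpace_closed : IsClosed gr.unitSpace :=
  isClosed_eq ha.toIsEtale.toIsTopological.continuous_src continuous_id

theorem aux_unitSpace_open : IsOpen gr.unitSpace := by
  rw [isOpen_iff_forall_mem_open]
  intro u hu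
  obtain ⟨e, heu, he⟩ := ha.toIsEtale.localHomeoRng u
  refine ⟨e.source ∩ gr.rng ⁻¹' e.source, ?_, e.open_source.inter
    (e.open_source.preimage (aux_continuous_rng ha)), heu, ?_⟩
  · rintro γ ⟨h1, h2⟩
    have hr : gr.rngTo γ = gr.rngTo (gr.rng γ) := by
      apply Subtype.ext
      show gr.rng γ = gr.rng (gr.rng γ)
      rw [gr.rng_rng]
    have : γ = gr.rng γ := e.injOn h1 h2 (by rw [he] at hr; exact hr)
    show gr.src γ = γ
    rw [this, gr.src_rng, ← this]
  · rw [Set.mem_preimage]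
    have : gr.rng u = u := aux_unit_rng gr hu
    rw [this]; exact heu

theorem aux_rng_isOpenMap : IsOpenMap gr.rng := by
  intro O hO
  have h1 : IsOpenMap gr.rngTo := (ha.toIsEtale.localHomeoRng).isOpenMap
  have h2 : IsOpenMap ((↑) : gr.unitSpace → G) :=
    (aux_unitSpace_open ha).isOpenMap_subtype_val
  have : gr.rng '' O = ((↑) : gr.unitSpace → G) '' (gr.rngTo '' O) := by
    rw [← Set.image_comp]; rfl
  rw [this]
  exact h2 _ (h1 _ hO)

theorem aux_unit_clopen_basis (x : gr.unitSpace) (T : Set gr.unitSpace) (hT : IsOpen T)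
    (hx : x ∈ T) :
    ∃ D : Set gr.unitSpace, IsCompact D ∧ IsClopen D ∧ x ∈ D ∧ D ⊆ T := by
  haveI := ha.toIsEtale.locallyCompactUnits
  haveI := ha.toIsEtale.t2Units
  obtain ⟨K, hKn, hKT, hKc⟩ := local_compact_nhds (hT.mem_nhds hx)
  obtain ⟨D, hD, hxD, hDK⟩ := ha.zeroDimUnits.exists_subset_of_mem_open
    (mem_interior_iff_mem_nhds.2 hKn) isOpen_interior
  exact ⟨D, hKc.of_isClosed_subset hD.isClosed (hDK.trans interior_subset), hD, hxD,
    fun y hy => hKT (interior_subset (hDK hy))⟩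

theorem aux_sandwich {K U : Set G} (hK : IsCompact K) (hKU : K ⊆ U) (hUo : IsOpen U)
    (hUsub : U ⊆ gr.unitSpace) :
    ∃ V : Set G, IsCompact V ∧ IsClopen V ∧ K ⊆ V ∧ V ⊆ U := by
  have key : ∀ x ∈ K, ∃ V : Set G, IsCompact V ∧ IsClopen V ∧ x ∈ V ∧ V ⊆ U := by
    intro x hx
    obtain ⟨D, hDc, hDcl, hxD, hDT⟩ := aux_unit_clopen_basis ha ⟨x, hUsub (hKU hx)⟩
      (((↑) : gr.unitSpace → G) ⁻¹' U) (hUo.preimage continuous_subtype_val)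
      (by simpa using hKU hx)
    refine ⟨((↑) : gr.unitSpace → G) '' D, hDc.image continuous_subtype_val,
      ⟨?_, ?_⟩, ⟨⟨x, hUsub (hKU hx)⟩, hxD, rfl⟩, ?_⟩
    · exact (aux_unitSpace_closed ha).isClosedMap_subtype_val _ hDcl.isClosed
    · exact (aux_unitSpace_open ha).isOpenMap_subtype_val _ hDcl.isOpen
    · rintro y ⟨z, hz, rfl⟩
      simpa using hDT hz
  classical
  choose! V hV using key
  obtain ⟨t, htK, hcov⟩ := hK.elim_nhds_subcover V
    (fun x hx => ((hV x hx).2.1.isOpen).mem_nhds (hV x hx).2.2.1)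
  refine ⟨⋃ x ∈ t, V x, ?_, ⟨?_, ?_⟩, hcov, ?_⟩
  · exact t.finite_toSet.isCompact_biUnion (fun x hx => (hV x (htK x hx)).1)
  · exact t.finite_toSet.isClosed_biUnion (fun x hx => (hV x (htK x hx)).2.1.isClosed)
  · exact isOpen_biUnion (fun x hx => (hV x (htK x hx)).2.1.isOpen)
  · exact Set.iUnion₂_subset (fun x hx => (hV x (htK x hx)).2.2.2)

end Topology
section Bisection

open Set Function

variable {G : Type*} [TopologicalSpace G] [T2Space G] {gr : DGroupoid G} (ha : gr.IsAmple)
include ha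

theorem aux_bisection_basis {γ : G} {O : Set G} (hO : IsOpen O) (hγ : γ ∈ O) :
    ∃ B : Set G, IsCompact B ∧ IsOpen B ∧ gr.IsBisection B ∧ γ ∈ B ∧ B ⊆ O := by
  obtain ⟨e, he1, he⟩ := ha.toIsEtale.localHomeoRng γ
  obtain ⟨e2, hi1, hi⟩ := ha.toIsEtale.localHomeoRng (gr.inv γ)
  set W : Set G := O ∩ e.source ∩ gr.inv ⁻¹' e2.source with hW
  have hWo : IsOpen W := ((hO.inter e.open_source).inter
    (e2.open_source.preimage ha.toIsEtale.toIsTopological.continuous_inv))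
  have hγW : γ ∈ W := ⟨⟨hγ, he1⟩, hi1⟩
  have hbis : gr.IsBisection W := by
    constructor
    · intro a haW b hbW hab
      exact e.injOn haW.1.2 hbW.1.2
        (by rw [← he]; exact Subtype.ext hab)
    · intro a haW b hbW hab
      have h1 : gr.rng (gr.inv a) = gr.rng (gr.inv b) := by
        rw [gr.rng_inv, gr.rng_inv, hab]
      have h2 : gr.inv a = gr.inv b := e2.injOn haW.2 hbW.2
        (by rw [← hi]; exact Subtype.ext h1)
      calc a = gr.inv (gr.inv a) := (aux_inv_inv gr a).symm
        _ = gr.inv (gr.inv b) := by rw [h2]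
        _ = b := aux_inv_inv gr b
  -- shrink to a compact open subset using the clopen basis of the unit space
  have hW' : W ∩ e.source = W := Set.inter_eq_self_of_subset_left
    (fun x hx => hx.1.2)
  have hTo : IsOpen (↑e '' W) :=
    e.isOpen_image_of_subset_source hWo (fun x hx => hx.1.2)
  have hγT : gr.rngTo γ ∈ ↑e '' W := ⟨γ, hγW, by rw [← he]⟩
  obtain ⟨D, hDc, hDcl, hxD, hDT⟩ := aux_unit_clopen_basis ha (gr.rngTo γ) (↑e '' W)
    hTo hγT
  refine ⟨W ∩ gr.rngTo ⁻¹' D, ?_, ?_, ⟨hbis.1.mono inter_subset_left,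
    hbis.2.mono inter_subset_left⟩, ⟨hγW, hxD⟩, fun x hx => hx.1.1.1⟩
  · -- compactness: this set is `e.symm '' D`
    have hDtgt : D ⊆ e.target := fun d hd => by
      obtain ⟨w, hw, rfl⟩ := hDT hd
      exact e.map_source hw.1.2
    have himg : W ∩ gr.rngTo ⁻¹' D = e.symm '' D := by
      ext b
      constructor
      · rintro ⟨hbW, hbD⟩
        refine ⟨e b, by rwa [← he], ?_⟩
        rw [e.left_inv hbW.1.2]
      · rintro ⟨d, hd, rfl⟩
        obtain ⟨w, hw, rfl⟩ := hDT hd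
        rw [e.left_inv hw.1.2]
        exact ⟨hw, by rw [he]; exact hd⟩
    rw [himg]
    exact hDc.image_of_continuousOn (e.continuousOn_symm.mono hDtgt)
  · exact hWo.inter ((aux_continuous_rngTo ha).isOpen_preimage _ hDcl.isOpen)

end Bisection
section Decompose

open Set Function

variable {G R : Type*} [TopologicalSpace G] [T2Space G] [CommRing R] {gr : DGroupoid G}

/-- Indicator of a set with a constant value. -/
noncomputable def aux_ind (B : Set G) (v : R) : G → R := B.indicator fun _ => v

theorem aux_ind_apply_mem {B : Set G} {v : R} {x : G} (hx : x ∈ B) : aux_ind B v x = v :=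
  Set.indicator_of_mem hx _

theorem aux_ind_apply_notMem {B : Set G} {v : R} {x : G} (hx : x ∉ B) : aux_ind B v x = 0 :=
  Set.indicator_of_notMem hx _

theorem aux_ind_steinberg {B : Set G} (hBc : IsCompact B) (hBo : IsOpen B) (v : R) :
    DGroupoid.InSteinberg R (aux_ind B v) := by
  constructor
  · intro s
    classical
    have : aux_ind B v ⁻¹' s =
        (if (v : R) ∈ s then B else ∅) ∪ (if (0 : R) ∈ s then Bᶜ else ∅) := by
      ext x
      by_cases hx : x ∈ B <;>
        simp only [Set.mem_preimage, aux_ind, Set.indicator_of_mem, Set.indicator_of_notMem,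
          hx, not_false_iff] <;> split_ifs <;>
        simp_all [Set.mem_union, Set.mem_empty_iff_false]
    rw [this]
    apply IsOpen.union <;> split_ifs <;>
      simp [hBo, hBc.isClosed.isOpen_compl, isOpen_empty]
  · exact HasCompactSupport.intro hBc (fun x hx => aux_ind_apply_notMem hx)

theorem aux_support_clopen_compact {f : G → R} (hf : DGroupoid.InSteinberg R f) :
    IsOpen (Function.support f) ∧ IsClosed (Function.support f) ∧
      IsCompact (Function.support f) := by
  have h1 : Function.support f = f ⁻¹' ({0}ᶜ) := by
    ext x; simp [Function.mem_support]
  have ho : IsOpen (Function.support f) := h1 ▸ hf.1 ({0}ᶜ)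
  have hcl : IsClosed (Function.support f) := by
    have h2 : (Function.support f)ᶜ = f ⁻¹' {0} := by
      ext x; simp [Function.mem_support]
    rw [← isOpen_compl_iff, h2]
    exact hf.1 {0}
  exact ⟨ho, hcl, hf.2.of_isClosed_subset hcl subset_closure⟩

theorem aux_decompose (ha : gr.IsAmple) {f : G → R} (hf : DGroupoid.InSteinberg R f) :
    ∃ (n : ℕ) (c : Fin n → R) (B : Fin n → Set G),
      (∀ k, IsCompact (B k) ∧ IsOpen (B k) ∧ gr.IsBisection (B k) ∧
        B k ⊆ Function.support f) ∧
      ∀ x, f x = ∑ k, aux_ind (B k) (c k) x := by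
  classical
  obtain ⟨hTo, hTcl, hTcomp⟩ := aux_support_clopen_compact hf
  have key : ∀ x ∈ Function.support f, ∃ B : Set G, IsCompact B ∧ IsOpen B ∧
      gr.IsBisection B ∧ x ∈ B ∧ B ⊆ f ⁻¹' {f x} := by
    intro x hx
    exact aux_bisection_basis ha (hf.1 {f x}) rfl
  choose! Bf hBf using key
  obtain ⟨t, htT, hcov⟩ := hTcomp.elim_nhds_subcover Bf
    (fun x hx => ((hBf x hx).2.1).mem_nhds (hBf x hx).2.2.2.1)
  set n := t.card with hn
  set g : Fin n → G := fun k => (t.equivFin.symm k).1 with hg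
  have hgt : ∀ k, g k ∈ t := fun k => (t.equivFin.symm k).2
  have hgT : ∀ k, g k ∈ Function.support f := fun k => htT _ (hgt k)
  set B : Fin n → Set G := fun k =>
    Bf (g k) \ ⋃ j ∈ Finset.univ.filter (fun j : Fin n => j < k), Bf (g j) with hB
  have hBsub : ∀ k, B k ⊆ Bf (g k) := fun k => Set.diff_subset
  have hfib : ∀ k, Bf (g k) ⊆ f ⁻¹' {f (g k)} := fun k => (hBf (g k) (hgT k)).2.2.2.2
  have hprops : ∀ k, IsCompact (B k) ∧ IsOpen (B k) ∧ gr.IsBisection (B k) ∧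
      B k ⊆ Function.support f := by
    intro k
    obtain ⟨hc, ho, hbis, _, _⟩ := hBf (g k) (hgT k)
    have hUo : IsOpen (⋃ j ∈ Finset.univ.filter (fun j : Fin n => j < k), Bf (g j)) :=
      isOpen_biUnion (fun j _ => (hBf (g j) (hgT j)).2.1)
    have hUcl : IsClosed (⋃ j ∈ Finset.univ.filter (fun j : Fin n => j < k), Bf (g j)) :=
      (Finset.univ.filter (fun j : Fin n => j < k)).finite_toSet.isClosed_biUnion
        (fun j _ => (hBf (g j) (hgT j)).1.isClosed)
    refine ⟨?_, ho.sdiff hUcl, ⟨hbis.1.mono (hBsub k), hbis.2.mono (hBsub k)⟩, ?_⟩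
    · exact hc.of_isClosed_subset (hc.isClosed.sdiff hUo) (hBsub k)
    · intro x hx
      have hfx : f x = f (g k) := hfib k (hBsub k hx)
      have hne : f (g k) ≠ 0 := hgT k
      rw [Function.mem_support, hfx]
      exact hne
  refine ⟨n, fun k => f (g k), B, hprops, ?_⟩
  intro x
  by_cases hx : x ∈ Function.support f
  · have hex : ∃ k : Fin n, x ∈ Bf (g k) := by
      obtain ⟨y, hy, hxy⟩ := Set.mem_iUnion₂.1 (hcov hx)
      refine ⟨t.equivFin ⟨y, hy⟩, ?_⟩
      have : g (t.equivFin ⟨y, hy⟩) = y := by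
        rw [hg]; simp
      rwa [this]
    set s := Finset.univ.filter (fun k : Fin n => x ∈ Bf (g k)) with hs
    have hsne : s.Nonempty := by
      obtain ⟨k, hk⟩ := hex; exact ⟨k, by simp [hs, hk]⟩
    set i := s.min' hsne with hi
    have hiB : x ∈ Bf (g i) := by
      have := s.min'_mem hsne; simp only [hs, Finset.mem_filter] at this; exact this.2
    have hxBi : x ∈ B i := by
      refine ⟨hiB, fun hmem => ?_⟩
      obtain ⟨j, hj, hxj⟩ := Set.mem_iUnion₂.1 hmem
      simp only [Finset.mem_filter, Finset.mem_univ, true_and] at hj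
      have : i ≤ j := s.min'_le j (by simp [hs, hxj])
      exact absurd hj (not_lt.2 this)
    have huniq : ∀ k, k ≠ i → x ∉ B k := by
      intro k hk hxk
      rcases lt_or_gt_of_ne hk with h | h
      · have : i ≤ k := s.min'_le k (by simp [hs, hxk.1])
        exact absurd h (not_lt.2 this)
      · exact hxk.2 (Set.mem_iUnion₂.2 ⟨i, by simp [h], hiB⟩)
    rw [Finset.sum_eq_single i (fun k _ hk => aux_ind_apply_notMem (huniq k hk))
      (by simp)]
    rw [aux_ind_apply_mem hxBi]
    exact hfib i hiB
  · have hzero : ∀ k, x ∉ B k := fun k hk => hx ((hprops k).2.2.2 hk)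
    rw [Finset.sum_eq_zero (fun k _ => aux_ind_apply_notMem (hzero k))]
    exact of_not_not (fun h => hx h)

end Decompose
section Product

open Set Function

variable {G : Type*} [TopologicalSpace G] [T2Space G] {gr : DGroupoid G}

theorem aux_inv_mul_cancel (gr : DGroupoid G) {a x : G} (hx : gr.src a = gr.rng x) :
    gr.mul (gr.inv a) (gr.mul a x) = x := by
  rw [← gr.mul_assoc _ _ _ (by rw [gr.src_inv]) hx, gr.inv_mul, hx, gr.rng_mul_self]

theorem aux_mul_inv_cancel (gr : DGroupoid G) {a x : G} (hx : gr.rng a = gr.rng x) :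
    gr.mul a (gr.mul (gr.inv a) x) = x := by
  rw [← gr.mul_assoc _ _ _ (gr.rng_inv a).symm (by rw [gr.src_inv, hx]), gr.mul_inv, hx,
    gr.rng_mul_self]

/-- The product of two subsets of a groupoid. -/
def aux_prodSet (gr : DGroupoid G) (B C : Set G) : Set G :=
  (fun p : G × G => gr.mul p.1 p.2) '' {p | p.1 ∈ B ∧ p.2 ∈ C ∧ gr.src p.1 = gr.rng p.2}

theorem aux_prodSet_compact (ha : gr.IsAmple) {B C : Set G} (hB : IsCompact B)
    (hC : IsCompact C) : IsCompact (aux_prodSet gr B C) := by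
  have hK : {p : G × G | p.1 ∈ B ∧ p.2 ∈ C ∧ gr.src p.1 = gr.rng p.2}
      = (B ×ˢ C) ∩ {p | gr.src p.1 = gr.rng p.2} := by
    ext p; constructor
    · rintro ⟨h1, h2, h3⟩; exact ⟨⟨h1, h2⟩, h3⟩
    · rintro ⟨⟨h1, h2⟩, h3⟩; exact ⟨h1, h2, h3⟩
  have hKc : IsCompact {p : G × G | p.1 ∈ B ∧ p.2 ∈ C ∧ gr.src p.1 = gr.rng p.2} := by
    rw [hK]
    exact (hB.prod hC).inter_right (isClosed_eq
      (ha.toIsEtale.toIsTopological.continuous_src.comp continuous_fst)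
      ((aux_continuous_rng ha).comp continuous_snd))
  exact hKc.image_of_continuousOn
    (ha.toIsEtale.toIsTopological.continuous_mul.mono (fun p hp => hp.2.2))

theorem aux_prodSet_open (ha : gr.IsAmple) {B C : Set G} (hBo : IsOpen B) (hCo : IsOpen C)
    (hBinj : Set.InjOn gr.rng B) : IsOpen (aux_prodSet gr B C) := by
  classical
  set ρ : G → G := fun x => if h : ∃ b ∈ B, gr.rng b = x then h.choose else x with hρdef
  have hρ : ∀ x ∈ gr.rng '' B, ρ x ∈ B ∧ gr.rng (ρ x) = x := by
    rintro x ⟨b, hb, rfl⟩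
    have h : ∃ b' ∈ B, gr.rng b' = gr.rng b := ⟨b, hb, rfl⟩
    rw [hρdef]
    simp only [dif_pos h]
    exact ⟨h.choose_spec.1, h.choose_spec.2⟩
  have hρeq : ∀ b ∈ B, ρ (gr.rng b) = b := by
    intro b hb
    have h := hρ (gr.rng b) ⟨b, hb, rfl⟩
    exact hBinj h.1 hb h.2
  have hρcont : ContinuousOn ρ (gr.rng '' B) := by
    rw [continuousOn_iff]
    intro x hx t ht hρt
    refine ⟨gr.rng '' (t ∩ B), aux_rng_isOpenMap ha _ (ht.inter hBo), ?_, ?_⟩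
    · obtain ⟨hρB, hρrng⟩ := hρ x hx
      exact ⟨ρ x, ⟨hρt, hρB⟩, hρrng⟩
    · rintro y ⟨⟨b', ⟨hb't, hb'B⟩, rfl⟩, hyB⟩
      have := hρeq b' hb'B
      rw [Set.mem_preimage, this]
      exact hb't
  set W : Set G := gr.rng ⁻¹' (gr.rng '' B) with hWdef
  have hWo : IsOpen W := (aux_rng_isOpenMap ha _ hBo).preimage (aux_continuous_rng ha)
  set Λ : G → G := fun γ => gr.mul (gr.inv (ρ (gr.rng γ))) γ with hΛdef
  have hmaps : Set.MapsTo (fun γ => (gr.inv (ρ (gr.rng γ)), γ)) W gr.composable := by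
    intro γ hγ
    show gr.src (gr.inv (ρ (gr.rng γ))) = gr.rng γ
    rw [gr.src_inv, (hρ _ hγ).2]
  have hΛcont : ContinuousOn Λ W := by
    have hpair : ContinuousOn (fun γ => (gr.inv (ρ (gr.rng γ)), γ)) W := by
      apply ContinuousOn.prodMk
      · exact ha.toIsEtale.toIsTopological.continuous_inv.comp_continuousOn
          (hρcont.comp (aux_continuous_rng ha).continuousOn (fun γ hγ => hγ))
      · exact continuousOn_id
    exact ha.toIsEtale.toIsTopological.continuous_mul.comp hpair hmaps
  have hset : aux_prodSet gr B C = W ∩ Λ ⁻¹' C := by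
    ext γ
    constructor
    · rintro ⟨⟨b, c⟩, ⟨hbB, hcC, hbc⟩, rfl⟩
      have hrng : gr.rng (gr.mul b c) = gr.rng b := gr.rng_mul b c hbc
      have hγW : gr.mul b c ∈ W := by
        rw [hWdef, Set.mem_preimage, hrng]
        exact ⟨b, hbB, rfl⟩
      refine ⟨hγW, ?_⟩
      rw [Set.mem_preimage, hΛdef]
      simp only [hrng, hρeq b hbB]
      rw [aux_inv_mul_cancel gr hbc]
      exact hcC
    · rintro ⟨hγW, hγC⟩
      rw [Set.mem_preimage] at hγC
      set b := ρ (gr.rng γ) with hbdef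
      obtain ⟨hbB, hbrng⟩ := hρ (gr.rng γ) hγW
      refine ⟨(b, Λ γ), ⟨hbB, hγC, ?_⟩, ?_⟩
      · rw [hΛdef]
        have : gr.rng (gr.mul (gr.inv b) γ) = gr.rng (gr.inv b) := by
          apply gr.rng_mul
          rw [gr.src_inv, hbrng]
        rw [this, gr.rng_inv]
      · show gr.mul b (gr.mul (gr.inv b) γ) = γ
        exact aux_mul_inv_cancel gr hbrng
  rw [hset]
  exact hΛcont.isOpen_inter_preimage hWo hCo

end Product
section ConvInd

open Set Function

variable {G R : Type*} [TopologicalSpace G] [T2Space G] [CommRing R] {gr : DGroupoid G}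

theorem aux_conv_ind {B C : Set G} (hBinj : Set.InjOn gr.rng B) (v w : R) :
    gr.conv R (aux_ind B v) (aux_ind C w) = aux_ind (aux_prodSet gr B C) (v * w) := by
  funext γ
  by_cases hγ : γ ∈ aux_prodSet gr B C
  · rw [aux_ind_apply_mem hγ]
    obtain ⟨⟨b, c⟩, ⟨hbB, hcC, hbc⟩, heq⟩ := id hγ
    change gr.mul b c = γ at heq
    change b ∈ B at hbB
    change c ∈ C at hcC
    change gr.src b = gr.rng c at hbc
    rw [aux_conv_eval_unique gr _ _ γ (b, c) hbc heq ?_]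
    · rw [aux_ind_apply_mem hbB, aux_ind_apply_mem hcC]
    · rintro ⟨p1, p2⟩ hc hm hne
      change gr.src p1 = gr.rng p2 at hc
      change gr.mul p1 p2 = γ at hm
      by_cases hp1 : p1 ∈ B
      · by_cases hp2 : p2 ∈ C
        · have hr : gr.rng p1 = gr.rng b := by
            have e1 : gr.rng (gr.mul p1 p2) = gr.rng p1 := gr.rng_mul _ _ hc
            have e2 : gr.rng (gr.mul b c) = gr.rng b := gr.rng_mul _ _ hbc
            rw [← e1, hm, ← heq, e2]
          have hp1b : p1 = b := hBinj hp1 hbB hr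
          subst hp1b
          have hp2c : p2 = c := aux_cancel_left gr hc hbc (by rw [hm, heq])
          subst hp2c
          rfl
        · refine absurd ?_ hne
          show aux_ind B v p1 * aux_ind C w p2 = 0
          rw [aux_ind_apply_notMem hp2, mul_zero]
      · refine absurd ?_ hne
        show aux_ind B v p1 * aux_ind C w p2 = 0
        rw [aux_ind_apply_notMem hp1, zero_mul]
  · rw [aux_ind_apply_notMem hγ]
    apply aux_conv_eval_zero
    rintro ⟨p1, p2⟩ hc hm
    change gr.src p1 = gr.rng p2 at hc
    change gr.mul p1 p2 = γ at hm
    by_cases hp1 : p1 ∈ B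
    · by_cases hp2 : p2 ∈ C
      · exact absurd ⟨(p1, p2), ⟨hp1, hp2, hc⟩, hm⟩ hγ
      · show aux_ind B v p1 * aux_ind C w p2 = 0
        rw [aux_ind_apply_notMem hp2, mul_zero]
    · show aux_ind B v p1 * aux_ind C w p2 = 0
      rw [aux_ind_apply_notMem hp1, zero_mul]

theorem aux_fin_right {C : Set G} (hC : Set.InjOn gr.src C) (f : G → R) (w : R) (γ : G) :
    ({p : G × G | gr.src p.1 = gr.rng p.2 ∧ gr.mul p.1 p.2 = γ} ∩
      Function.support (fun p : G × G => f p.1 * aux_ind C w p.2)).Subsingleton := by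
  rintro ⟨p1, p2⟩ ⟨⟨hpc, hpm⟩, hps⟩ ⟨q1, q2⟩ ⟨⟨hqc, hqm⟩, hqs⟩
  change gr.src p1 = gr.rng p2 at hpc
  change gr.mul p1 p2 = γ at hpm
  change gr.src q1 = gr.rng q2 at hqc
  change gr.mul q1 q2 = γ at hqm
  have hp2 : p2 ∈ C := by
    by_contra h
    exact hps (by show f p1 * aux_ind C w p2 = 0; rw [aux_ind_apply_notMem h, mul_zero])
  have hq2 : q2 ∈ C := by
    by_contra h
    exact hqs (by show f q1 * aux_ind C w q2 = 0; rw [aux_ind_apply_notMem h, mul_zero])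
  have hsrc : gr.src p2 = gr.src q2 := by
    have e1 : gr.src (gr.mul p1 p2) = gr.src p2 := gr.src_mul _ _ hpc
    have e2 : gr.src (gr.mul q1 q2) = gr.src q2 := gr.src_mul _ _ hqc
    rw [← e1, hpm, ← hqm, e2]
  have h2 : p2 = q2 := hC hp2 hq2 hsrc
  have h1 : p1 = q1 := by
    rw [aux_eq_mul_inv gr hpc hpm, aux_eq_mul_inv gr hqc hqm, h2]
  exact Prod.ext h1 h2

theorem aux_fin_left {B : Set G} (hB : Set.InjOn gr.rng B) (g : G → R) (v : R) (γ : G) :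
    ({p : G × G | gr.src p.1 = gr.rng p.2 ∧ gr.mul p.1 p.2 = γ} ∩
      Function.support (fun p : G × G => aux_ind B v p.1 * g p.2)).Subsingleton := by
  rintro ⟨p1, p2⟩ ⟨⟨hpc, hpm⟩, hps⟩ ⟨q1, q2⟩ ⟨⟨hqc, hqm⟩, hqs⟩
  change gr.src p1 = gr.rng p2 at hpc
  change gr.mul p1 p2 = γ at hpm
  change gr.src q1 = gr.rng q2 at hqc
  change gr.mul q1 q2 = γ at hqm
  have hp1 : p1 ∈ B := by
    by_contra h
    exact hps (by show aux_ind B v p1 * g p2 = 0; rw [aux_ind_apply_notMem h, zero_mul])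
  have hq1 : q1 ∈ B := by
    by_contra h
    exact hqs (by show aux_ind B v q1 * g q2 = 0; rw [aux_ind_apply_notMem h, zero_mul])
  have hrng : gr.rng p1 = gr.rng q1 := by
    have e1 : gr.rng (gr.mul p1 p2) = gr.rng p1 := gr.rng_mul _ _ hpc
    have e2 : gr.rng (gr.mul q1 q2) = gr.rng q1 := gr.rng_mul _ _ hqc
    rw [← e1, hpm, ← hqm, e2]
  have h1 : p1 = q1 := hB hp1 hq1 hrng
  have h2 : p2 = q2 := by
    have ep : p2 = gr.mul (gr.inv p1) γ := by
      rw [← hpm, aux_inv_mul_cancel gr hpc]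
    have eq' : q2 = gr.mul (gr.inv q1) γ := by
      rw [← hqm, aux_inv_mul_cancel gr hqc]
    rw [ep, eq', h1]
  exact Prod.ext h1 h2

theorem aux_conv_add_right_apply (f g1 g2 : G → R) (γ : G)
    (h1 : ({p : G × G | gr.src p.1 = gr.rng p.2 ∧ gr.mul p.1 p.2 = γ} ∩
      Function.support (fun p : G × G => f p.1 * g1 p.2)).Finite)
    (h2 : ({p : G × G | gr.src p.1 = gr.rng p.2 ∧ gr.mul p.1 p.2 = γ} ∩
      Function.support (fun p : G × G => f p.1 * g2 p.2)).Finite) :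
    gr.conv R f (fun x => g1 x + g2 x) γ = gr.conv R f g1 γ + gr.conv R f g2 γ := by
  show (∑ᶠ p ∈ {p : G × G | gr.src p.1 = gr.rng p.2 ∧ gr.mul p.1 p.2 = γ},
      f p.1 * (g1 p.2 + g2 p.2)) = gr.conv R f g1 γ + gr.conv R f g2 γ
  have : ∀ p ∈ {p : G × G | gr.src p.1 = gr.rng p.2 ∧ gr.mul p.1 p.2 = γ},
      f p.1 * (g1 p.2 + g2 p.2) = f p.1 * g1 p.2 + f p.1 * g2 p.2 :=
    fun p _ => mul_add _ _ _
  rw [finsum_mem_congr rfl this]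
  exact finsum_mem_add_distrib' h1 h2

theorem aux_conv_add_left_apply (f1 f2 g : G → R) (γ : G)
    (h1 : ({p : G × G | gr.src p.1 = gr.rng p.2 ∧ gr.mul p.1 p.2 = γ} ∩
      Function.support (fun p : G × G => f1 p.1 * g p.2)).Finite)
    (h2 : ({p : G × G | gr.src p.1 = gr.rng p.2 ∧ gr.mul p.1 p.2 = γ} ∩
      Function.support (fun p : G × G => f2 p.1 * g p.2)).Finite) :
    gr.conv R (fun x => f1 x + f2 x) g γ = gr.conv R f1 g γ + gr.conv R f2 g γ := by
  show (∑ᶠ p ∈ {p : G × G | gr.src p.1 = gr.rng p.2 ∧ gr.mul p.1 p.2 = γ},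
      (f1 p.1 + f2 p.1) * g p.2) = gr.conv R f1 g γ + gr.conv R f2 g γ
  have : ∀ p ∈ {p : G × G | gr.src p.1 = gr.rng p.2 ∧ gr.mul p.1 p.2 = γ},
      (f1 p.1 + f2 p.1) * g p.2 = f1 p.1 * g p.2 + f2 p.1 * g p.2 :=
    fun p _ => add_mul _ _ _
  rw [finsum_mem_congr rfl this]
  exact finsum_mem_add_distrib' h1 h2

end ConvInd
section ConvSum

open Set Function

variable {G R : Type*} [TopologicalSpace G] [T2Space G] [CommRing R] {gr : DGroupoid G}

theorem aux_conv_sum_right (f : G → R) {m : ℕ} (C : Fin m → Set G)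
    (hC : ∀ l, Set.InjOn gr.src (C l)) (w : Fin m → R) (s : Finset (Fin m)) (γ : G) :
    gr.conv R f (fun x => ∑ l ∈ s, aux_ind (C l) (w l) x) γ
      = ∑ l ∈ s, gr.conv R f (aux_ind (C l) (w l)) γ := by
  classical
  induction s using Finset.induction_on with
  | empty =>
    rw [Finset.sum_empty]
    apply aux_conv_eval_zero
    intro p _ _
    show f p.1 * (∑ l ∈ (∅ : Finset (Fin m)), aux_ind (C l) (w l) p.2) = 0
    rw [Finset.sum_empty, mul_zero]
  | @insert a s' hnot ih =>
    have hfun : (fun x => ∑ l ∈ insert a s', aux_ind (C l) (w l) x)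
        = fun x => aux_ind (C a) (w a) x + ∑ l ∈ s', aux_ind (C l) (w l) x := by
      funext x
      rw [Finset.sum_insert hnot]
    rw [hfun, Finset.sum_insert hnot, ← ih]
    apply aux_conv_add_right_apply
    · exact ((aux_fin_right (hC a) f (w a) γ)).finite
    · have hsub : {p : G × G | gr.src p.1 = gr.rng p.2 ∧ gr.mul p.1 p.2 = γ} ∩
          Function.support (fun p : G × G => f p.1 * ∑ l ∈ s', aux_ind (C l) (w l) p.2)
          ⊆ ⋃ l ∈ (s' : Set (Fin m)),
            ({p : G × G | gr.src p.1 = gr.rng p.2 ∧ gr.mul p.1 p.2 = γ} ∩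
              Function.support (fun p : G × G => f p.1 * aux_ind (C l) (w l) p.2)) := by
        rintro p ⟨hpP, hps⟩
        rw [Function.mem_support] at hps
        have : ∃ l ∈ s', f p.1 * aux_ind (C l) (w l) p.2 ≠ 0 := by
          by_contra hcon
          push_neg at hcon
          exact hps (by rw [Finset.mul_sum]; exact Finset.sum_eq_zero hcon)
        obtain ⟨l, hl, hlne⟩ := this
        exact Set.mem_iUnion₂.2 ⟨l, hl, hpP, hlne⟩
      exact Set.Finite.subset (Set.Finite.biUnion s'.finite_toSet
        (fun l _ => (aux_fin_right (hC l) f (w l) γ).finite)) hsub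

theorem aux_conv_sum_left (g : G → R) {n : ℕ} (B : Fin n → Set G)
    (hB : ∀ k, Set.InjOn gr.rng (B k)) (v : Fin n → R) (s : Finset (Fin n)) (γ : G) :
    gr.conv R (fun x => ∑ k ∈ s, aux_ind (B k) (v k) x) g γ
      = ∑ k ∈ s, gr.conv R (aux_ind (B k) (v k)) g γ := by
  classical
  induction s using Finset.induction_on with
  | empty =>
    rw [Finset.sum_empty]
    apply aux_conv_eval_zero
    intro p _ _
    show (∑ k ∈ (∅ : Finset (Fin n)), aux_ind (B k) (v k) p.1) * g p.2 = 0
    rw [Finset.sum_empty, zero_mul]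
  | @insert a s' hnot ih =>
    have hfun : (fun x => ∑ k ∈ insert a s', aux_ind (B k) (v k) x)
        = fun x => aux_ind (B a) (v a) x + ∑ k ∈ s', aux_ind (B k) (v k) x := by
      funext x
      rw [Finset.sum_insert hnot]
    rw [hfun, Finset.sum_insert hnot, ← ih]
    apply aux_conv_add_left_apply
    · exact ((aux_fin_left (hB a) g (v a) γ)).finite
    · have hsub : {p : G × G | gr.src p.1 = gr.rng p.2 ∧ gr.mul p.1 p.2 = γ} ∩
          Function.support (fun p : G × G => (∑ k ∈ s', aux_ind (B k) (v k) p.1) * g p.2)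
          ⊆ ⋃ k ∈ (s' : Set (Fin n)),
            ({p : G × G | gr.src p.1 = gr.rng p.2 ∧ gr.mul p.1 p.2 = γ} ∩
              Function.support (fun p : G × G => aux_ind (B k) (v k) p.1 * g p.2)) := by
        rintro p ⟨hpP, hps⟩
        rw [Function.mem_support] at hps
        have : ∃ k ∈ s', aux_ind (B k) (v k) p.1 * g p.2 ≠ 0 := by
          by_contra hcon
          push_neg at hcon
          exact hps (by rw [Finset.sum_mul]; exact Finset.sum_eq_zero hcon)
        obtain ⟨k, hk, hkne⟩ := this
        exact Set.mem_iUnion₂.2 ⟨k, hk, hpP, hkne⟩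
      exact Set.Finite.subset (Set.Finite.biUnion s'.finite_toSet
        (fun k _ => (aux_fin_left (hB k) g (v k) γ).finite)) hsub

theorem aux_conv_eq_sum {n m : ℕ} (v : Fin n → R) (B : Fin n → Set G)
    (w : Fin m → R) (C : Fin m → Set G)
    (hB : ∀ k, Set.InjOn gr.rng (B k)) (hC : ∀ l, Set.InjOn gr.src (C l)) :
    gr.conv R (fun x => ∑ k, aux_ind (B k) (v k) x) (fun x => ∑ l, aux_ind (C l) (w l) x)
      = fun γ => ∑ k, ∑ l, aux_ind (aux_prodSet gr (B k) (C l)) (v k * w l) γ := by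
  funext γ
  rw [aux_conv_sum_right _ C hC w Finset.univ γ]
  have : ∀ l, gr.conv R (fun x => ∑ k, aux_ind (B k) (v k) x) (aux_ind (C l) (w l)) γ
      = ∑ k, gr.conv R (aux_ind (B k) (v k)) (aux_ind (C l) (w l)) γ :=
    fun l => aux_conv_sum_left _ B hB v Finset.univ γ
  rw [Finset.sum_congr rfl (fun l _ => this l)]
  rw [Finset.sum_comm]
  congr 1
  funext k
  congr 1
  funext l
  rw [aux_conv_ind (hB k) (v k) (w l)]

end ConvSum
section Final

open Set Function

variable {G R : Type*} [TopologicalSpace G] [T2Space G] [CommRing R] {gr : DGroupoid G}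

theorem aux_conv_mem_span (ha : gr.IsAmple) {U : Set G} (hUsub : U ⊆ gr.unitSpace)
    (hinv : ∀ γ, gr.rng γ ∈ U ↔ gr.src γ ∈ U)
    {f j : G → R} (hf : DGroupoid.InSteinberg R f) (hj : DGroupoid.InSteinberg R j)
    (hjU : ∀ γ, gr.src γ ∉ U → j γ = 0) :
    gr.conv R f j ∈ Submodule.span R
        {h : G → R | DGroupoid.InSteinberg R h ∧ ∀ γ, gr.src γ ∉ U → h γ = 0} ∧
    gr.conv R j f ∈ Submodule.span R
        {h : G → R | DGroupoid.InSteinberg R h ∧ ∀ γ, gr.src γ ∉ U → h γ = 0} := by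
  obtain ⟨n, v, B, hBp, hfeq⟩ := aux_decompose ha hf
  obtain ⟨m, w, C, hCp, hjeq⟩ := aux_decompose ha hj
  have hfe : f = fun x => ∑ k, aux_ind (B k) (v k) x := funext hfeq
  have hje : j = fun x => ∑ l, aux_ind (C l) (w l) x := funext hjeq
  have hsrcC : ∀ l, ∀ c ∈ C l, gr.src c ∈ U := by
    intro l c hc
    by_contra h
    exact (hCp l).2.2.2 hc (hjU c h)
  constructor
  · rw [hfe, hje, aux_conv_eq_sum v B w C (fun k => (hBp k).2.2.1.1)
      (fun l => (hCp l).2.2.1.2)]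
    have hfun : (fun γ => ∑ k, ∑ l, aux_ind (aux_prodSet gr (B k) (C l)) (v k * w l) γ)
        = ∑ k, ∑ l, aux_ind (aux_prodSet gr (B k) (C l)) (v k * w l) := by
      funext γ
      simp [Finset.sum_apply]
    rw [hfun]
    apply Submodule.sum_mem
    intro k _
    apply Submodule.sum_mem
    intro l _
    apply Submodule.subset_span
    refine ⟨aux_ind_steinberg (aux_prodSet_compact ha (hBp k).1 (hCp l).1)
      (aux_prodSet_open ha (hBp k).2.1 (hCp l).2.1 (hBp k).2.2.1.1) _, ?_⟩
    intro γ hγU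
    by_cases hγ : γ ∈ aux_prodSet gr (B k) (C l)
    · exfalso
      obtain ⟨⟨b, c⟩, ⟨hb, hc, hcomp⟩, heq⟩ := hγ
      change b ∈ B k at hb; change c ∈ C l at hc
      change gr.src b = gr.rng c at hcomp
      change gr.mul b c = γ at heq
      have : gr.src γ = gr.src c := by rw [← heq, gr.src_mul _ _ hcomp]
      exact hγU (this ▸ hsrcC l c hc)
    · exact aux_ind_apply_notMem hγ
  · rw [hfe, hje, aux_conv_eq_sum w C v B (fun l => (hCp l).2.2.1.1)
      (fun k => (hBp k).2.2.1.2)]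
    have hfun : (fun γ => ∑ l, ∑ k, aux_ind (aux_prodSet gr (C l) (B k)) (w l * v k) γ)
        = ∑ l, ∑ k, aux_ind (aux_prodSet gr (C l) (B k)) (w l * v k) := by
      funext γ
      simp [Finset.sum_apply]
    rw [hfun]
    apply Submodule.sum_mem
    intro l _
    apply Submodule.sum_mem
    intro k _
    apply Submodule.subset_span
    refine ⟨aux_ind_steinberg (aux_prodSet_compact ha (hCp l).1 (hBp k).1)
      (aux_prodSet_open ha (hCp l).2.1 (hBp k).2.1 (hCp l).2.2.1.1) _, ?_⟩
    intro γ hγU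
    by_cases hγ : γ ∈ aux_prodSet gr (C l) (B k)
    · exfalso
      obtain ⟨⟨c, b⟩, ⟨hc, hb, hcomp⟩, heq⟩ := hγ
      change c ∈ C l at hc; change b ∈ B k at hb
      change gr.src c = gr.rng b at hcomp
      change gr.mul c b = γ at heq
      have h1 : gr.src γ = gr.src b := by rw [← heq, gr.src_mul _ _ hcomp]
      have h2 : gr.rng b ∈ U := hcomp ▸ hsrcC l c hc
      exact hγU (h1 ▸ (hinv b).1 h2)
    · exact aux_ind_apply_notMem hγ

theorem aux_conv_unit_right {V : Set G} (hV : V ⊆ gr.unitSpace) (j : G → R)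
    (hVsupp : ∀ γ, j γ ≠ 0 → gr.src γ ∈ V) :
    gr.conv R j (aux_ind V (1 : R)) = j := by
  funext γ
  rw [aux_conv_eval_unique gr _ _ γ (γ, gr.src γ) (gr.rng_src γ).symm (gr.mul_src γ) ?_]
  · by_cases hjγ : j γ = 0
    · rw [hjγ, zero_mul]
    · rw [aux_ind_apply_mem (hVsupp γ hjγ), mul_one]
  · rintro ⟨p1, p2⟩ hc hm hne
    change gr.src p1 = gr.rng p2 at hc
    change gr.mul p1 p2 = γ at hm
    have hp2V : p2 ∈ V := by
      by_contra h
      exact hne (by show j p1 * aux_ind V 1 p2 = 0; rw [aux_ind_apply_notMem h, mul_zero])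
    have hp2u : gr.rng p2 = p2 := aux_unit_rng gr (hV hp2V)
    have hsp : gr.src p1 = p2 := hc.trans hp2u
    have hp1 : p1 = γ := by rw [← hm, ← hsp, gr.mul_src]
    refine Prod.ext hp1 ?_
    show p2 = gr.src γ
    rw [← hp1, hsp]
  -- done

theorem aux_conv_unit_left {V : Set G} (hV : V ⊆ gr.unitSpace) (j : G → R)
    (hVsupp : ∀ γ, j γ ≠ 0 → gr.rng γ ∈ V) :
    gr.conv R (aux_ind V (1 : R)) j = j := by
  funext γ
  rw [aux_conv_eval_unique gr _ _ γ (gr.rng γ, γ) (gr.src_rng γ) (gr.rng_mul_self γ) ?_]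
  · by_cases hjγ : j γ = 0
    · rw [hjγ, mul_zero]
    · rw [aux_ind_apply_mem (hVsupp γ hjγ), one_mul]
  · rintro ⟨p1, p2⟩ hc hm hne
    change gr.src p1 = gr.rng p2 at hc
    change gr.mul p1 p2 = γ at hm
    have hp1V : p1 ∈ V := by
      by_contra h
      exact hne (by show aux_ind V 1 p1 * j p2 = 0; rw [aux_ind_apply_notMem h, zero_mul])
    have hp1u : gr.src p1 = p1 := hV hp1V
    have hrp : p1 = gr.rng p2 := hp1u.symm.trans hc
    have hp2 : p2 = γ := by rw [← hm, hrp, gr.rng_mul_self]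
    refine Prod.ext ?_ hp2
    show p1 = gr.rng γ
    rw [← hp2, hrp]

end Final
/-- For an open invariant subset `U ⊆ G⁽⁰⁾`,
`A_R(G|_U) = A_R(G)·A_R(U) = A_R(U)·A_R(G)`, and `A_R(G|_U)` is a two-sided
ideal of `A_R(G)`. -/
theorem stmt9 {G R : Type*} [TopologicalSpace G] [T2Space G] [CommRing R]
    (gr : DGroupoid G) (ha : gr.IsAmple)
    (U : Set G) (hUo : IsOpen U) (hUsub : U ⊆ gr.unitSpace)
    (hinv : ∀ γ, gr.rng γ ∈ U ↔ gr.src γ ∈ U)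
    (S SU AU : Set (G → R))
    (hS : S = {f | DGroupoid.InSteinberg R f})
    (hSU : SU = {f | DGroupoid.InSteinberg R f ∧ ∀ γ, gr.src γ ∉ U → f γ = 0})
    (hAU : AU = {f | DGroupoid.InSteinberg R f ∧ ∀ x ∉ U, f x = 0}) :
    Submodule.span R SU
        = Submodule.span R {h | ∃ x ∈ S, ∃ y ∈ AU, h = gr.conv R x y} ∧
    Submodule.span R SU
        = Submodule.span R {h | ∃ x ∈ AU, ∃ y ∈ S, h = gr.conv R x y} ∧
    (∀ f ∈ S, ∀ j ∈ SU, gr.conv R f j ∈ Submodule.span R SU ∧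
      gr.conv R j f ∈ Submodule.span R SU) := by
  subst hS hSU hAU
  -- `AU ⊆ SU`
  have hAUsubSU : {f : G → R | DGroupoid.InSteinberg R f ∧ ∀ x ∉ U, f x = 0}
      ⊆ {f : G → R | DGroupoid.InSteinberg R f ∧ ∀ γ, gr.src γ ∉ U → f γ = 0} := by
    rintro f ⟨hf, hv⟩
    refine ⟨hf, fun γ hγ => hv γ (fun hmem => hγ ?_)⟩
    have : gr.src γ = γ := hUsub hmem
    rw [this]
    exact hmem
  -- the ideal property
  have key : ∀ f ∈ {f : G → R | DGroupoid.InSteinberg R f},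
      ∀ j ∈ {f : G → R | DGroupoid.InSteinberg R f ∧ ∀ γ, gr.src γ ∉ U → f γ = 0},
      gr.conv R f j ∈ Submodule.span R
        {f : G → R | DGroupoid.InSteinberg R f ∧ ∀ γ, gr.src γ ∉ U → f γ = 0} ∧
      gr.conv R j f ∈ Submodule.span R
        {f : G → R | DGroupoid.InSteinberg R f ∧ ∀ γ, gr.src γ ∉ U → f γ = 0} :=
    fun f hf j hj => aux_conv_mem_span ha hUsub hinv hf hj.1 hj.2
  -- every element of `SU` factors through the unit indicator
  have factor : ∀ j ∈ {f : G → R | DGroupoid.InSteinberg R f ∧ ∀ γ, gr.src γ ∉ U → f γ = 0},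
      ∃ y ∈ {f : G → R | DGroupoid.InSteinberg R f ∧ ∀ x ∉ U, f x = 0},
        gr.conv R j y = j ∧ gr.conv R y j = j := by
    rintro j ⟨hjS, hjU⟩
    obtain ⟨_, _, hcomp⟩ := aux_support_clopen_compact hjS
    have hcsrc : Continuous gr.src := ha.toIsEtale.toIsTopological.continuous_src
    have hKc : IsCompact (gr.src '' Function.support j ∪ gr.rng '' Function.support j) :=
      (hcomp.image hcsrc).union (hcomp.image (aux_continuous_rng ha))
    have hKU : gr.src '' Function.support j ∪ gr.rng '' Function.support j ⊆ U := by
      rintro x (⟨γ, hγ, rfl⟩ | ⟨γ, hγ, rfl⟩)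
      · by_contra h
        exact hγ (hjU γ h)
      · refine (hinv γ).2 ?_
        by_contra h
        exact hγ (hjU γ h)
    obtain ⟨V, hVc, hVcl, hKV, hVU⟩ := aux_sandwich ha hKc hKU hUo hUsub
    refine ⟨aux_ind V (1 : R), ⟨aux_ind_steinberg hVc hVcl.isOpen 1,
      fun x hx => aux_ind_apply_notMem (fun hmem => hx (hVU hmem))⟩, ?_, ?_⟩
    · exact aux_conv_unit_right (hVU.trans hUsub) j
        (fun γ hγ => hKV (Or.inl ⟨γ, hγ, rfl⟩))
    · exact aux_conv_unit_left (hVU.trans hUsub) j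
        (fun γ hγ => hKV (Or.inr ⟨γ, hγ, rfl⟩))
  refine ⟨le_antisymm ?_ ?_, le_antisymm ?_ ?_, key⟩
  · apply Submodule.span_mono
    intro j hj
    obtain ⟨y, hy, hjy, _⟩ := factor j hj
    exact ⟨j, hj.1, y, hy, hjy.symm⟩
  · apply Submodule.span_le.2
    rintro h ⟨x, hx, y, hy, rfl⟩
    exact (key x hx y (hAUsubSU hy)).1
  · apply Submodule.span_mono
    intro j hj
    obtain ⟨y, hy, _, hyj⟩ := factor j hj
    exact ⟨y, hy, j, hj.1, hyj.symm⟩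
  · apply Submodule.span_le.2
    rintro h ⟨x, hx, y, hy, rfl⟩
    exact (key y hy x (hAUsubSU hx)).2
end

section
/- Let A be a symmetrically Γ-graded algebra (A_g A_{g⁻¹} A_g = A_g for all g) and I an invariant idempotent ideal of A_e (I² = I and A_g I = I A_g for all g). Then the induced ideal Ind(I) = ⊕_g I·A_g is symmetrically graded. Conversely, if A_e is s-unital and Ind(I) is symmetrically graded for an invariant ideal I, then I is idempotent. -/
/-- For a symmetrically `Γ`-graded algebra `A` and an invariant ideal `I ⊴ A_e`:
if `I` is idempotent then `Ind(I) = ⊕_g I·A_g` is symmetrically graded;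
conversely, if `A_e` is s-unital and `Ind(I)` is symmetrically graded then `I`
is idempotent. -/
theorem stmt14 {R A Γ : Type*} [CommRing R] [Ring A] [Algebra R A] [Group Γ]
    [DecidableEq Γ]
    (𝒜 : Γ → Submodule R A) (hdec : DirectSum.IsInternal 𝒜)
    (hmul : ∀ g h, 𝒜 g * 𝒜 h ≤ 𝒜 (g * h))
    (hsym : ∀ g, 𝒜 g * 𝒜 g⁻¹ * 𝒜 g = 𝒜 g)
    (I : Submodule R A) (hIle : I ≤ 𝒜 1)
    (hIl : 𝒜 1 * I ≤ I) (hIr : I * 𝒜 1 ≤ I)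
    (hinvar : ∀ g, 𝒜 g * I = I * 𝒜 g) :
    (I * I = I →
      ∀ g, (I * 𝒜 g) * (I * 𝒜 g⁻¹) * (I * 𝒜 g) = I * 𝒜 g) ∧
    ((∀ F : Finset A, (↑F : Set A) ⊆ (𝒜 1 : Set A) →
        ∃ u ∈ 𝒜 1, ∀ x ∈ F, u * x = x ∧ x * u = x) →
      (∀ g, (I * 𝒜 g) * (I * 𝒜 g⁻¹) * (I * 𝒜 g) = I * 𝒜 g) →
      I * I = I) := by
  constructor
  · intro hI g
    simp only [mul_assoc]
    rw [← mul_assoc (𝒜 g) I, hinvar g, mul_assoc I (𝒜 g),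
        ← mul_assoc (𝒜 g⁻¹) I, hinvar g⁻¹, mul_assoc I (𝒜 g⁻¹),
        ← mul_assoc (𝒜 g) I, hinvar g, mul_assoc I (𝒜 g),
        ← mul_assoc (𝒜 g) (𝒜 g⁻¹), hsym g,
        ← mul_assoc I I, hI, ← mul_assoc I I, hI]
  · intro hsu hsg
    have hA1 : I * 𝒜 1 = I := by
      refine le_antisymm hIr ?_
      intro x hx
      obtain ⟨u, hu, h⟩ := hsu {x} (by simpa using hIle hx)
      have hxu : x * u = x := (h x (by simp)).2
      exact hxu ▸ Submodule.mul_mem_mul hx hu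
    have h1 := hsg 1
    rw [inv_one, hA1] at h1
    have hle : I * I ≤ I := le_trans (mul_le_mul' le_rfl hIle) hIr
    refine le_antisymm hle ?_
    calc I = I * I * I := h1.symm
      _ ≤ I * I * 𝒜 1 := mul_le_mul' le_rfl hIle
      _ = I * (I * 𝒜 1) := by rw [mul_assoc]
      _ = I * I := by rw [hA1]
end

section
/- Let A be a Γ-graded algebra and J a graded ideal of A which is symmetrically graded (with grading J_g = J ∩ A_g). Then J_e = J ∩ A_e is an invariant idempotent ideal of A_e, and J = Ind(J_e) = ⊕_g J_e·A_g; moreover J_e·A_g = A_g·J_e = J_g for every g. -/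
/-- If `J` is a symmetrically graded ideal of a `Γ`-graded algebra `A`, then
`J_e = J ∩ A_e` is an invariant idempotent ideal of `A_e`, `J = Ind(J_e)`, and
`J_e·A_g = A_g·J_e = J_g` for every `g`. -/
theorem stmt16 {R A Γ : Type*} [CommRing R] [Ring A] [Algebra R A] [Group Γ]
    [DecidableEq Γ]
    (𝒜 : Γ → Submodule R A) (hdec : DirectSum.IsInternal 𝒜)
    (hmul : ∀ g h, 𝒜 g * 𝒜 h ≤ 𝒜 (g * h))
    (J : Submodule R A)
    (hJl : (⊤ : Submodule R A) * J ≤ J) (hJr : J * (⊤ : Submodule R A) ≤ J)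
    (hgraded : J = ⨆ g, J ⊓ 𝒜 g)
    (hsym : ∀ g, (J ⊓ 𝒜 g) * (J ⊓ 𝒜 g⁻¹) * (J ⊓ 𝒜 g) = J ⊓ 𝒜 g) :
    𝒜 1 * (J ⊓ 𝒜 1) ≤ J ⊓ 𝒜 1 ∧
    (J ⊓ 𝒜 1) * 𝒜 1 ≤ J ⊓ 𝒜 1 ∧
    (J ⊓ 𝒜 1) * (J ⊓ 𝒜 1) = J ⊓ 𝒜 1 ∧
    (∀ g, 𝒜 g * (J ⊓ 𝒜 1) = (J ⊓ 𝒜 1) * 𝒜 g) ∧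
    (∀ g, (J ⊓ 𝒜 1) * 𝒜 g = J ⊓ 𝒜 g ∧ 𝒜 g * (J ⊓ 𝒜 1) = J ⊓ 𝒜 g) ∧
    J = ⨆ g, (J ⊓ 𝒜 1) * 𝒜 g := by
  -- products of graded pieces of J land in J ⊓ 𝒜 1
  have hJJ : ∀ g : Γ, (J ⊓ 𝒜 g) * (J ⊓ 𝒜 g⁻¹) ≤ J ⊓ 𝒜 1 := by
    intro g
    refine le_inf ?_ ?_
    · exact le_trans (mul_le_mul' inf_le_left le_top) hJr
    · refine le_trans (mul_le_mul' inf_le_right inf_le_right) ?_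
      simpa using hmul g g⁻¹
  have hJJ' : ∀ g : Γ, (J ⊓ 𝒜 g⁻¹) * (J ⊓ 𝒜 g) ≤ J ⊓ 𝒜 1 := by
    intro g
    have := hJJ g⁻¹
    simpa using this
  -- I * 𝒜 g ≤ J ⊓ 𝒜 g
  have hIA : ∀ g : Γ, (J ⊓ 𝒜 1) * 𝒜 g ≤ J ⊓ 𝒜 g := by
    intro g
    refine le_inf ?_ ?_
    · exact le_trans (mul_le_mul' inf_le_left le_top) hJr
    · refine le_trans (mul_le_mul' inf_le_right le_rfl) ?_
      simpa using hmul 1 g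
  have hAI : ∀ g : Γ, 𝒜 g * (J ⊓ 𝒜 1) ≤ J ⊓ 𝒜 g := by
    intro g
    refine le_inf ?_ ?_
    · exact le_trans (mul_le_mul' le_top inf_le_left) hJl
    · refine le_trans (mul_le_mul' le_rfl inf_le_right) ?_
      simpa using hmul g 1
  -- reverse inclusions from symmetry
  have hle : ∀ g : Γ, J ⊓ 𝒜 g ≤ (J ⊓ 𝒜 1) * 𝒜 g := by
    intro g
    conv_lhs => rw [← hsym g]
    exact mul_le_mul' (hJJ g) inf_le_right
  have hle' : ∀ g : Γ, J ⊓ 𝒜 g ≤ 𝒜 g * (J ⊓ 𝒜 1) := by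
    intro g
    conv_lhs => rw [← hsym g, mul_assoc]
    exact mul_le_mul' inf_le_right (hJJ' g)
  have key : ∀ g : Γ, (J ⊓ 𝒜 1) * 𝒜 g = J ⊓ 𝒜 g := fun g =>
    le_antisymm (hIA g) (hle g)
  have key' : ∀ g : Γ, 𝒜 g * (J ⊓ 𝒜 1) = J ⊓ 𝒜 g := fun g =>
    le_antisymm (hAI g) (hle' g)
  refine ⟨hAI 1, hIA 1, ?_, ?_, fun g => ⟨key g, key' g⟩, ?_⟩
  · refine le_antisymm ?_ ?_
    · exact le_trans (mul_le_mul' le_rfl inf_le_right) (hIA 1)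
    · conv_lhs => rw [← hsym 1]
      refine le_trans (mul_le_mul' ?_ le_rfl) le_rfl
      simpa using hJJ 1
  · intro g; rw [key g, key' g]
  · conv_lhs => rw [hgraded]
    exact iSup_congr fun g => (key g).symm
end

section
/- Let A = ⊕_{g∈Γ} A_g be a symmetrically graded algebra with A_e s-unital. Then I ↦ Ind(I) = ⊕_g I·A_g is a bijection from the set of invariant idempotent ideals of A_e onto the set of symmetrically graded ideals of A, with inverse J ↦ J ∩ A_e. -/
section AuxStmt17
variable {R A Γ : Type*} [CommRing R] [Ring A] [Algebra R A] [Group Γ]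

set_option linter.unusedSectionVars false

/-- For an independent family `𝒜`, if `N h ≤ 𝒜 h` for all `h`, then
`(⨆ h, N h) ⊓ 𝒜 g = N g`. -/
lemma aux_sup_inf_stmt17 (𝒜 : Γ → Submodule R A) (hind : iSupIndep 𝒜)
    (N : Γ → Submodule R A) (hN : ∀ h, N h ≤ 𝒜 h) (g : Γ) :
    (⨆ h, N h) ⊓ 𝒜 g = N g := by
  classical
  refine le_antisymm ?_ (le_inf (le_iSup N g) (hN g))
  rintro x ⟨hx1, hx2⟩
  obtain ⟨f, hf, hfx⟩ := (Submodule.mem_iSup_iff_exists_finsupp N x).mp hx1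
  have hsub : f.support ⊆ insert g (f.support.erase g) := by
    intro a ha
    by_cases hag : a = g
    · simp [hag]
    · simp [Finset.mem_erase, hag, ha]
  have hx : x = f g + ∑ h ∈ f.support.erase g, f h := by
    rw [← hfx, Finsupp.sum]
    rw [Finset.sum_subset hsub (by intro a _ ha; simpa using ha)]
    rw [Finset.sum_insert (Finset.notMem_erase g _)]
  have hy : x - f g ∈ 𝒜 g := sub_mem hx2 (hN g (hf g))
  have hy2 : x - f g ∈ ⨆ (j) (_ : j ≠ g), 𝒜 j := by
    have hrw : x - f g = ∑ h ∈ f.support.erase g, f h := by rw [hx]; abel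
    rw [hrw]
    refine Submodule.sum_mem _ fun h hh => ?_
    have hhg : h ≠ g := (Finset.mem_erase.mp hh).1
    exact le_iSup₂ (f := fun j (_ : j ≠ g) => 𝒜 j) h hhg (hN h (hf h))
  have hz : x - f g = 0 := (Submodule.disjoint_def.mp (hind g)) _ hy hy2
  rw [sub_eq_zero.mp hz]
  exact hf g

/-- Shuffling lemma: if `I` is idempotent and `X` commutes with `I`, then
`(I*X)*(I*Y) = I*(X*Y)`. -/
lemma aux_shuffle_stmt17 {I X Y : Submodule R A} (hII : I * I = I)
    (hX : X * I = I * X) : (I * X) * (I * Y) = I * (X * Y) := by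
  calc (I * X) * (I * Y) = I * ((X * I) * Y) := by rw [mul_assoc, ← mul_assoc X]
    _ = I * ((I * X) * Y) := by rw [hX]
    _ = (I * I) * (X * Y) := by rw [mul_assoc I X Y, ← mul_assoc]
    _ = I * (X * Y) := by rw [hII]

end AuxStmt17

/-- For a symmetrically `Γ`-graded algebra with `A_e` s-unital, `I ↦ Ind(I)` is a
bijection from invariant idempotent ideals of `A_e` onto symmetrically graded
ideals of `A`, with inverse `J ↦ J ∩ A_e`. -/
theorem stmt17 {R A Γ : Type*} [CommRing R] [Ring A] [Algebra R A] [Group Γ]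
    [DecidableEq Γ]
    (𝒜 : Γ → Submodule R A) (hdec : DirectSum.IsInternal 𝒜)
    (hmul : ∀ g h, 𝒜 g * 𝒜 h ≤ 𝒜 (g * h))
    (hsym : ∀ g, 𝒜 g * 𝒜 g⁻¹ * 𝒜 g = 𝒜 g)
    (hsu : ∀ F : Finset A, (↑F : Set A) ⊆ (𝒜 1 : Set A) →
      ∃ u ∈ 𝒜 1, ∀ x ∈ F, u * x = x ∧ x * u = x) :
    (∀ I : Submodule R A, I ≤ 𝒜 1 → 𝒜 1 * I ≤ I → I * 𝒜 1 ≤ I →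
      I * I = I → (∀ g, 𝒜 g * I = I * 𝒜 g) →
      ((⊤ : Submodule R A) * (⨆ g, I * 𝒜 g) ≤ (⨆ g, I * 𝒜 g) ∧
       (⨆ g, I * 𝒜 g) * (⊤ : Submodule R A) ≤ (⨆ g, I * 𝒜 g) ∧
       ((⨆ g, I * 𝒜 g) = ⨆ g, (⨆ h, I * 𝒜 h) ⊓ 𝒜 g) ∧
       (∀ g, ((⨆ h, I * 𝒜 h) ⊓ 𝒜 g) * ((⨆ h, I * 𝒜 h) ⊓ 𝒜 g⁻¹) *
          ((⨆ h, I * 𝒜 h) ⊓ 𝒜 g) = (⨆ h, I * 𝒜 h) ⊓ 𝒜 g) ∧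
       (⨆ g, I * 𝒜 g) ⊓ 𝒜 1 = I)) ∧
    (∀ J : Submodule R A, (⊤ : Submodule R A) * J ≤ J → J * (⊤ : Submodule R A) ≤ J →
      (J = ⨆ g, J ⊓ 𝒜 g) →
      (∀ g, (J ⊓ 𝒜 g) * (J ⊓ 𝒜 g⁻¹) * (J ⊓ 𝒜 g) = J ⊓ 𝒜 g) →
      ∃ I : Submodule R A, I ≤ 𝒜 1 ∧ 𝒜 1 * I ≤ I ∧ I * 𝒜 1 ≤ I ∧ I * I = I ∧
        (∀ g, 𝒜 g * I = I * 𝒜 g) ∧ (⨆ g, I * 𝒜 g) = J) := by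
  have hind : iSupIndep 𝒜 := hdec.submodule_iSupIndep
  have htop : (⨆ g, 𝒜 g) = ⊤ := hdec.submodule_iSup_eq_top
  have hmul' : ∀ g h : Γ, 𝒜 g * 𝒜 h ≤ 𝒜 (g * h) := hmul
  constructor
  · -- forward direction
    intro I hI1 hA1I hIA1 hII hinv
    -- basic facts
    have hIA1' : I * 𝒜 1 = I :=
      le_antisymm hIA1 (by
        calc I = I * I := hII.symm
          _ ≤ I * 𝒜 1 := mul_le_mul' le_rfl hI1)
    -- each piece lands in 𝒜 g
    have hNle : ∀ g, I * 𝒜 g ≤ 𝒜 g := fun g => by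
      calc I * 𝒜 g ≤ 𝒜 1 * 𝒜 g := mul_le_mul' hI1 le_rfl
        _ ≤ 𝒜 (1 * g) := hmul 1 g
        _ = 𝒜 g := by rw [one_mul]
    have hpiece : ∀ g, (⨆ h, I * 𝒜 h) ⊓ 𝒜 g = I * 𝒜 g := fun g =>
      aux_sup_inf_stmt17 𝒜 hind (fun h => I * 𝒜 h) hNle g
    have hleft : (⊤ : Submodule R A) * (⨆ g, I * 𝒜 g) ≤ ⨆ g, I * 𝒜 g := by
      rw [← htop, Submodule.iSup_mul]
      refine iSup_le fun h => ?_
      rw [Submodule.mul_iSup]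
      refine iSup_le fun g => ?_
      calc 𝒜 h * (I * 𝒜 g) = (𝒜 h * I) * 𝒜 g := (mul_assoc _ _ _).symm
        _ = (I * 𝒜 h) * 𝒜 g := by rw [hinv h]
        _ = I * (𝒜 h * 𝒜 g) := mul_assoc _ _ _
        _ ≤ I * 𝒜 (h * g) := mul_le_mul' le_rfl (hmul h g)
        _ ≤ ⨆ g, I * 𝒜 g := le_iSup (fun g => I * 𝒜 g) (h * g)
    have hright : (⨆ g, I * 𝒜 g) * (⊤ : Submodule R A) ≤ ⨆ g, I * 𝒜 g := by
      rw [← htop, Submodule.mul_iSup]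
      refine iSup_le fun h => ?_
      rw [Submodule.iSup_mul]
      refine iSup_le fun g => ?_
      calc (I * 𝒜 g) * 𝒜 h = I * (𝒜 g * 𝒜 h) := mul_assoc _ _ _
        _ ≤ I * 𝒜 (g * h) := mul_le_mul' le_rfl (hmul g h)
        _ ≤ ⨆ g, I * 𝒜 g := le_iSup (fun g => I * 𝒜 g) (g * h)
    refine ⟨hleft, hright, ?_, ?_, ?_⟩
    · exact (iSup_congr hpiece).symm
    · intro g
      rw [hpiece g, hpiece g⁻¹]
      have hXg : 𝒜 g * I = I * 𝒜 g := hinv g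
      have hXc : (𝒜 g * 𝒜 g⁻¹) * I = I * (𝒜 g * 𝒜 g⁻¹) := by
        calc (𝒜 g * 𝒜 g⁻¹) * I = 𝒜 g * (𝒜 g⁻¹ * I) := mul_assoc _ _ _
          _ = 𝒜 g * (I * 𝒜 g⁻¹) := by rw [hinv g⁻¹]
          _ = (𝒜 g * I) * 𝒜 g⁻¹ := (mul_assoc _ _ _).symm
          _ = (I * 𝒜 g) * 𝒜 g⁻¹ := by rw [hXg]
          _ = I * (𝒜 g * 𝒜 g⁻¹) := mul_assoc _ _ _
      calc (I * 𝒜 g) * (I * 𝒜 g⁻¹) * (I * 𝒜 g)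
          = (I * (𝒜 g * 𝒜 g⁻¹)) * (I * 𝒜 g) := by
            rw [aux_shuffle_stmt17 hII hXg]
        _ = I * ((𝒜 g * 𝒜 g⁻¹) * 𝒜 g) := aux_shuffle_stmt17 hII hXc
        _ = I * 𝒜 g := by rw [hsym g]
    · rw [hpiece 1, hIA1']
  · -- backward direction
    intro J hJl hJr hgr hJsym
    refine ⟨J ⊓ 𝒜 1, inf_le_right, ?_, ?_, ?_, ?_, ?_⟩
    · -- 𝒜 1 * (J ⊓ 𝒜 1) ≤ J ⊓ 𝒜 1
      refine le_inf ?_ ?_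
      · exact le_trans (mul_le_mul' le_top inf_le_left) hJl
      · refine le_trans (mul_le_mul' le_rfl inf_le_right) ?_
        simpa using hmul 1 1
    · refine le_inf ?_ ?_
      · exact le_trans (mul_le_mul' inf_le_left le_top) hJr
      · refine le_trans (mul_le_mul' inf_le_right le_rfl) ?_
        simpa using hmul 1 1
    · -- idempotence
      have hle : (J ⊓ 𝒜 1) * (J ⊓ 𝒜 1) ≤ J ⊓ 𝒜 1 := by
        refine le_inf ?_ ?_
        · exact le_trans (mul_le_mul' inf_le_left le_top) hJr
        · refine le_trans (mul_le_mul' inf_le_right inf_le_right) ?_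
          simpa using hmul 1 1
      refine le_antisymm hle ?_
      have h1 := hJsym 1
      rw [inv_one] at h1
      calc J ⊓ 𝒜 1 = (J ⊓ 𝒜 1) * (J ⊓ 𝒜 1) * (J ⊓ 𝒜 1) := h1.symm
        _ = (J ⊓ 𝒜 1) * ((J ⊓ 𝒜 1) * (J ⊓ 𝒜 1)) := mul_assoc _ _ _
        _ ≤ (J ⊓ 𝒜 1) * (J ⊓ 𝒜 1) := mul_le_mul' le_rfl hle
    · -- invariance via the two descriptions of J ⊓ 𝒜 g
      have hpieceR : ∀ g : Γ, J ⊓ 𝒜 g = (J ⊓ 𝒜 1) * 𝒜 g := by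
        intro g
        refine le_antisymm ?_ ?_
        · have hfac : (J ⊓ 𝒜 g) * (J ⊓ 𝒜 g⁻¹) ≤ J ⊓ 𝒜 1 := by
            refine le_inf ?_ ?_
            · exact le_trans (mul_le_mul' inf_le_left le_top) hJr
            · refine le_trans (mul_le_mul' inf_le_right inf_le_right) ?_
              simpa using hmul g g⁻¹
          calc J ⊓ 𝒜 g = (J ⊓ 𝒜 g) * (J ⊓ 𝒜 g⁻¹) * (J ⊓ 𝒜 g) := (hJsym g).symm
            _ ≤ (J ⊓ 𝒜 1) * 𝒜 g := mul_le_mul' hfac inf_le_right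
        · refine le_inf ?_ ?_
          · exact le_trans (mul_le_mul' inf_le_left le_top) hJr
          · refine le_trans (mul_le_mul' inf_le_right le_rfl) ?_
            simpa using hmul 1 g
      have hpieceL : ∀ g : Γ, J ⊓ 𝒜 g = 𝒜 g * (J ⊓ 𝒜 1) := by
        intro g
        refine le_antisymm ?_ ?_
        · have hfac : (J ⊓ 𝒜 g⁻¹) * (J ⊓ 𝒜 g) ≤ J ⊓ 𝒜 1 := by
            refine le_inf ?_ ?_
            · exact le_trans (mul_le_mul' inf_le_left le_top) hJr
            · refine le_trans (mul_le_mul' inf_le_right inf_le_right) ?_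
              simpa using hmul g⁻¹ g
          calc J ⊓ 𝒜 g = (J ⊓ 𝒜 g) * (J ⊓ 𝒜 g⁻¹) * (J ⊓ 𝒜 g) := (hJsym g).symm
            _ = (J ⊓ 𝒜 g) * ((J ⊓ 𝒜 g⁻¹) * (J ⊓ 𝒜 g)) := mul_assoc _ _ _
            _ ≤ 𝒜 g * (J ⊓ 𝒜 1) := mul_le_mul' inf_le_right hfac
        · refine le_inf ?_ ?_
          · exact le_trans (mul_le_mul' le_top inf_le_left) hJl
          · refine le_trans (mul_le_mul' le_rfl inf_le_right) ?_
            simpa using hmul g 1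
      intro g
      rw [← hpieceL g, hpieceR g]
    · -- ⨆ g, (J ⊓ 𝒜 1) * 𝒜 g = J
      have hpieceR : ∀ g : Γ, J ⊓ 𝒜 g = (J ⊓ 𝒜 1) * 𝒜 g := by
        intro g
        refine le_antisymm ?_ ?_
        · have hfac : (J ⊓ 𝒜 g) * (J ⊓ 𝒜 g⁻¹) ≤ J ⊓ 𝒜 1 := by
            refine le_inf ?_ ?_
            · exact le_trans (mul_le_mul' inf_le_left le_top) hJr
            · refine le_trans (mul_le_mul' inf_le_right inf_le_right) ?_
              simpa using hmul g g⁻¹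
          calc J ⊓ 𝒜 g = (J ⊓ 𝒜 g) * (J ⊓ 𝒜 g⁻¹) * (J ⊓ 𝒜 g) := (hJsym g).symm
            _ ≤ (J ⊓ 𝒜 1) * 𝒜 g := mul_le_mul' hfac inf_le_right
        · refine le_inf ?_ ?_
          · exact le_trans (mul_le_mul' inf_le_left le_top) hJr
          · refine le_trans (mul_le_mul' inf_le_right le_rfl) ?_
            simpa using hmul 1 g
      calc (⨆ g, (J ⊓ 𝒜 1) * 𝒜 g) = ⨆ g, J ⊓ 𝒜 g :=
            iSup_congr fun g => (hpieceR g).symm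
        _ = J := hgr.symm
end

section
/- Let G be an ample Hausdorff groupoid, Γ a discrete group, and c : G → Γ a locally constant cocycle (c(γ₁γ₂) = c(γ₁)c(γ₂) for composable pairs). Setting A_g = C_c(G_g, R) where G_g = c⁻¹(g), the submodules A_g form a Γ-grading of the Steinberg algebra A_R(G), and this grading is symmetric: A_g A_{g⁻¹} A_g = A_g for all g ∈ Γ. -/
open TopologicalSpace

/-! Ample groupoids have a basis of compact open bisections, so every Steinberg function is a
finite sum `∑ rᵢ 1_{Dᵢ}` over disjoint compact open bisections. Convolution with `1_D`, `D` a
bisection, has a single term: `(1_D * y)(γ) = y(α⁻¹γ)` for the unique `α ∈ D` with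
`r(α) = r(γ)`. Since `α` depends continuously on `γ` (through a chart of `r`), this gives closure
of `A_R(G)` under convolution, and it gives `1_U * r 1_V = r 1_{UV}`. The support of `x * y` lies
in `supp x · supp y`, so the cocycle identity makes the convolution graded; and for a bisection
`D ⊆ G_g`, `r 1_D = 1_D * 1_{D⁻¹} * r 1_D` with factors in `A_g`, `A_{g⁻¹}`, `A_g`. -/

open Set Function Topology

theorem exists_isCompact_isClopen_subset {X : Type*} [TopologicalSpace X] [LocallyCompactSpace X]
    (hX : IsTopologicalBasis {s : Set X | IsClopen s}) {S : Set X} (hS : IsOpen S) {x : X}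
    (hx : x ∈ S) : ∃ C, IsCompact C ∧ IsClopen C ∧ x ∈ C ∧ C ⊆ S := by
  obtain ⟨K, hK, hKS, hKc⟩ := local_compact_nhds (hS.mem_nhds hx)
  obtain ⟨C, hC, hxC, hCK⟩ :=
    hX.exists_subset_of_mem_open (mem_interior_iff_mem_nhds.mpr hK) isOpen_interior
  exact ⟨C, hKc.of_isClosed_subset hC.isClosed (hCK.trans interior_subset), hC, hxC,
    hCK.trans (interior_subset.trans hKS)⟩

theorem exists_finset_eq_sum_indicator_preimage {X Γ M : Type*} [TopologicalSpace X]
    [AddCommMonoid M] {c : X → Γ} (hc : IsLocallyConstant c) {f : X → M}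
    (hf : IsCompact (support f)) :
    ∃ F : Finset Γ, ∀ x, f x = ∑ g ∈ F, (c ⁻¹' {g}).indicator f x := by
  classical
  obtain ⟨F, hF⟩ := hf.elim_finite_subcover (fun g => c ⁻¹' {g}) (fun g => hc {g})
    fun x _ => mem_iUnion.mpr ⟨c x, rfl⟩
  refine ⟨F, fun x => ?_⟩
  by_cases hx : c x ∈ F
  · rw [Finset.sum_eq_single_of_mem (c x) hx fun g _ hg =>
      indicator_of_notMem (show x ∉ c ⁻¹' {g} from hg ∘ Eq.symm) f]
    exact (indicator_of_mem (show x ∈ c ⁻¹' {c x} from rfl) f).symm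
  · have hfx : f x = 0 := notMem_support.mp fun h => by
      obtain ⟨g, hg, hxg⟩ := mem_iUnion₂.mp (hF h)
      exact hx ((hxg : c x = g) ▸ hg)
    rw [hfx, Finset.sum_eq_zero fun g hg =>
      indicator_of_notMem (show x ∉ c ⁻¹' {g} from fun hxg => hx ((hxg : c x = g) ▸ hg)) f]

namespace DGroupoid

variable {G : Type*} (gr : DGroupoid G)

theorem inv_involutive : Involutive gr.inv := fun a => by
  have h₁ : gr.src (gr.inv (gr.inv a)) = gr.rng (gr.inv a) := gr.src_inv _
  have h₂ : gr.src (gr.inv a) = gr.rng a := gr.src_inv a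
  calc gr.inv (gr.inv a)
      = gr.mul (gr.inv (gr.inv a)) (gr.mul (gr.inv a) a) := by
        rw [gr.inv_mul, ← gr.rng_inv, ← h₁, gr.mul_src]
    _ = gr.mul (gr.src (gr.inv a)) a := by rw [← gr.mul_assoc _ _ _ h₁ h₂, gr.inv_mul]
    _ = a := by rw [h₂, gr.rng_mul_self]

theorem mul_inv_mul_of_rng_eq {α γ : G} (h : gr.rng α = gr.rng γ) :
    gr.mul α (gr.mul (gr.inv α) γ) = γ := by
  rw [← gr.mul_assoc _ _ _ (gr.rng_inv α).symm (by rw [gr.src_inv, h]), gr.mul_inv, h,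
    gr.rng_mul_self]

theorem inv_mul_mul_of_src_eq {α β : G} (h : gr.src α = gr.rng β) :
    gr.mul (gr.inv α) (gr.mul α β) = β := by
  rw [← gr.mul_assoc _ _ _ (gr.src_inv α) h, gr.inv_mul, h, gr.rng_mul_self]

def mulSet (U V : Set G) : Set G :=
  (fun p : G × G => gr.mul p.1 p.2) '' (U ×ˢ V ∩ gr.composable)

theorem mulSet_image_inv_self {D : Set G} (hD : InjOn gr.rng D) :
    gr.mulSet (gr.inv '' D) D = gr.src '' D := by
  ext γ
  constructor
  · rintro ⟨⟨_, b⟩, ⟨⟨⟨a, ha, rfl⟩, hb⟩, hab⟩, rfl⟩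
    have hab : gr.rng a = gr.rng b := by rw [← gr.src_inv]; exact hab
    obtain rfl := hD ha hb hab
    exact ⟨a, ha, (gr.inv_mul a).symm⟩
  · rintro ⟨a, ha, rfl⟩
    exact ⟨(gr.inv a, a), ⟨⟨mem_image_of_mem _ ha, ha⟩, gr.src_inv a⟩, gr.inv_mul a⟩

theorem mulSet_image_src {D : Set G} (hD : InjOn gr.src D) :
    gr.mulSet D (gr.src '' D) = D := by
  ext γ
  constructor
  · rintro ⟨⟨a, _⟩, ⟨⟨ha, ⟨b, hb, rfl⟩⟩, hab⟩, rfl⟩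
    have hab : gr.src a = gr.src b := by rw [← gr.rng_src b]; exact hab
    obtain rfl : a = b := hD ha hb hab
    simpa only [gr.mul_src] using ha
  · intro hγ
    exact ⟨(γ, gr.src γ), ⟨⟨hγ, mem_image_of_mem _ hγ⟩, (gr.rng_src γ).symm⟩, gr.mul_src γ⟩

theorem src_eq_rng_inv_mul {α γ : G} (h : gr.rng α = gr.rng γ) :
    gr.src α = gr.rng (gr.mul (gr.inv α) γ) := by
  rw [gr.rng_mul _ _ (by rw [gr.src_inv, h]), gr.rng_inv]

theorem injOn_rng_image_inv {D : Set G} (hD : InjOn gr.src D) : InjOn gr.rng (gr.inv '' D) := by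
  rintro _ ⟨a, ha, rfl⟩ _ ⟨b, hb, rfl⟩ hab
  rw [gr.rng_inv, gr.rng_inv] at hab
  rw [hD ha hb hab]

section Cocycle

variable {Γ : Type*} [Group Γ]

def IsCocycle (c : G → Γ) : Prop := ∀ a b, gr.src a = gr.rng b → c (gr.mul a b) = c a * c b

variable {gr} {c : G → Γ}

theorem IsCocycle.map_src (hc : gr.IsCocycle c) (a : G) : c (gr.src a) = 1 := by
  have h := hc a (gr.src a) (gr.rng_src a).symm
  rwa [gr.mul_src, left_eq_mul] at h

theorem IsCocycle.map_inv (hc : gr.IsCocycle c) (a : G) : c (gr.inv a) = (c a)⁻¹ := by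
  have h := hc (gr.inv a) a (gr.src_inv a)
  rw [gr.inv_mul, hc.map_src] at h
  exact eq_inv_of_mul_eq_one_left h.symm

theorem IsCocycle.mulSet_subset (hc : gr.IsCocycle c) {U V : Set G} {g h : Γ}
    (hU : U ⊆ c ⁻¹' {g}) (hV : V ⊆ c ⁻¹' {h}) : gr.mulSet U V ⊆ c ⁻¹' {g * h} := by
  rintro _ ⟨p, ⟨⟨hpU, hpV⟩, hp⟩, rfl⟩
  show c (gr.mul p.1 p.2) = g * h
  rw [hc _ _ hp, (hU hpU : c p.1 = g), (hV hpV : c p.2 = h)]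

end Cocycle

section Convolution

variable {gr} {R : Type*} [CommRing R]

theorem conv_apply (x y : G → R) (γ : G) :
    gr.conv R x y γ = ∑ᶠ α ∈ gr.rng ⁻¹' {gr.rng γ}, x α * y (gr.mul (gr.inv α) γ) := by
  have hfiber : {p : G × G | gr.src p.1 = gr.rng p.2 ∧ gr.mul p.1 p.2 = γ} =
      (fun α => (α, gr.mul (gr.inv α) γ)) '' (gr.rng ⁻¹' {gr.rng γ}) := by
    ext p
    constructor
    · rintro ⟨hp, rfl⟩
      exact ⟨p.1, (gr.rng_mul _ _ hp).symm, Prod.ext rfl (gr.inv_mul_mul_of_src_eq hp)⟩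
    · rintro ⟨α, hα : gr.rng α = gr.rng γ, rfl⟩
      exact ⟨gr.src_eq_rng_inv_mul hα, gr.mul_inv_mul_of_rng_eq hα⟩
  rw [conv, hfiber, finsum_mem_image fun a _ b _ h => congrArg Prod.fst h]

theorem support_conv_subset (x y : G → R) :
    support (gr.conv R x y) ⊆ gr.mulSet (support x) (support y) := by
  intro γ hγ
  obtain ⟨p, ⟨hp, rfl⟩, hxy⟩ := exists_ne_zero_of_finsum_mem_ne_zero hγ
  exact ⟨p, ⟨⟨left_ne_zero_of_mul hxy, right_ne_zero_of_mul hxy⟩, hp⟩, rfl⟩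

theorem conv_finset_sum_left {ι : Type*} (s : Finset ι) (x : ι → G → R) (y : G → R)
    (hx : ∀ i ∈ s, ∀ u, (gr.rng ⁻¹' {u} ∩ support (x i)).Finite) :
    gr.conv R (∑ i ∈ s, x i) y = ∑ i ∈ s, gr.conv R (x i) y := by
  funext γ
  simp only [conv_apply, Finset.sum_apply, Finset.sum_mul, finsum_mem_def]
  rw [← Finset.sum_fn, Finset.indicator_sum]
  simp only [Finset.sum_apply]
  refine finsum_sum_comm s _ fun i hi => (hx i hi (gr.rng γ)).subset ?_
  rw [support_indicator]
  exact inter_subset_inter_right _ (support_mul_subset_left _ _)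

variable {U : Set G} (r : R) (y : G → R) {γ : G}

theorem conv_indicator_of_mem (hU : InjOn gr.rng U) {α : G} (hα : α ∈ U)
    (hαγ : gr.rng α = gr.rng γ) :
    gr.conv R (U.indicator fun _ => r) y γ = r * y (gr.mul (gr.inv α) γ) := by
  rw [conv_apply, finsum_mem_def, finsum_eq_single _ α,
    indicator_of_mem (show α ∈ gr.rng ⁻¹' {gr.rng γ} from hαγ), indicator_of_mem hα]
  intro β hβα
  by_cases hβγ : β ∈ gr.rng ⁻¹' {gr.rng γ}
  · have hβU : β ∉ U := fun hβU => hβα (hU hβU hα (Eq.trans hβγ hαγ.symm))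
    rw [indicator_of_mem hβγ, indicator_of_notMem hβU, zero_mul]
  · exact indicator_of_notMem hβγ _

theorem conv_indicator_of_forall_ne (h : ∀ α ∈ U, gr.rng α ≠ gr.rng γ) :
    gr.conv R (U.indicator fun _ => r) y γ = 0 := by
  rw [conv_apply]
  refine finsum_mem_of_eqOn_zero fun α hα => ?_
  simp [indicator_of_notMem fun hαU => h α hαU hα]

theorem finite_rng_preimage_inter_support_indicator (hU : InjOn gr.rng U) (f : G → R) (u : G) :
    (gr.rng ⁻¹' {u} ∩ support (U.indicator f)).Finite :=
  Subsingleton.finite fun _ ⟨ha, haU⟩ _ ⟨hb, hbU⟩ =>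
    hU (support_indicator_subset haU) (support_indicator_subset hbU) (Eq.trans ha hb.symm)

theorem conv_indicator_indicator (hU : InjOn gr.rng U) (V : Set G) :
    gr.conv R (U.indicator fun _ => 1) (V.indicator fun _ => r) =
      (gr.mulSet U V).indicator fun _ => r := by
  funext γ
  by_cases h : ∃ α ∈ U, gr.rng α = gr.rng γ
  · obtain ⟨α, hα, hαγ⟩ := h
    have hmem : gr.mul (gr.inv α) γ ∈ V ↔ γ ∈ gr.mulSet U V := by
      constructor
      · intro hV
        exact ⟨(α, _), ⟨⟨hα, hV⟩, gr.src_eq_rng_inv_mul hαγ⟩, gr.mul_inv_mul_of_rng_eq hαγ⟩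
      · rintro ⟨⟨a, b⟩, ⟨⟨ha, hb⟩, hab⟩, rfl⟩
        obtain rfl : a = α := hU ha hα ((gr.rng_mul a b hab).symm.trans hαγ.symm)
        show gr.mul (gr.inv a) (gr.mul a b) ∈ V
        rwa [gr.inv_mul_mul_of_src_eq hab]
    rw [conv_indicator_of_mem _ _ hU hα hαγ, one_mul]
    by_cases hV : gr.mul (gr.inv α) γ ∈ V
    · rw [indicator_of_mem hV, indicator_of_mem (hmem.mp hV)]
    · rw [indicator_of_notMem hV, indicator_of_notMem (mt hmem.mpr hV)]
  · simp only [not_exists, not_and] at h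
    rw [conv_indicator_of_forall_ne _ _ h, indicator_of_notMem]
    rintro ⟨p, ⟨⟨hp1, -⟩, hp⟩, rfl⟩
    exact h p.1 hp1 (gr.rng_mul _ _ hp).symm

theorem IsBisection.conv_indicator_inv_conv {D : Set G} (hD : gr.IsBisection D) :
    gr.conv R (D.indicator fun _ => 1)
        (gr.conv R ((gr.inv '' D).indicator fun _ => 1) (D.indicator fun _ => r)) =
      D.indicator fun _ => r := by
  rw [conv_indicator_indicator _ (gr.injOn_rng_image_inv hD.2), gr.mulSet_image_inv_self hD.1,
    conv_indicator_indicator _ hD.1, gr.mulSet_image_src hD.2]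

end Convolution

section Topology

variable [TopologicalSpace G] {gr}

theorem IsTopological.continuous_rngTo (ht : gr.IsTopological) : Continuous gr.rngTo :=
  ht.continuous_rng.subtype_mk _

theorem IsTopological.isCompact_mulSet [T2Space G] (ht : gr.IsTopological) {U V : Set G}
    (hU : IsCompact U) (hV : IsCompact V) : IsCompact (gr.mulSet U V) :=
  ((hU.prod hV).inter_right (isClosed_eq (ht.continuous_src.comp continuous_fst)
    (ht.continuous_rng.comp continuous_snd))).image_of_continuousOn
    (ht.continuous_mul.mono inter_subset_right)

variable (gr) in
/-- The chart of the range map is part of the data: it inverts `rng` continuously on `D`. -/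
structure IsCompactOpenBisection (D : Set G) : Prop where
  isCompact : IsCompact D
  isOpen : IsOpen D
  injOn_src : InjOn gr.src D
  exists_chart : ∃ e : OpenPartialHomeomorph G gr.unitSpace, gr.rngTo = e ∧ D ⊆ e.source

theorem IsCompactOpenBisection.isBisection {D : Set G} (hD : gr.IsCompactOpenBisection D) :
    gr.IsBisection D := by
  obtain ⟨e, he, hDe⟩ := hD.exists_chart
  refine ⟨fun a ha b hb hab => e.injOn (hDe ha) (hDe hb) ?_, hD.injOn_src⟩
  rw [← he]
  exact Subtype.ext hab

theorem IsCompactOpenBisection.mono {D E : Set G} (hD : gr.IsCompactOpenBisection D)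
    (hED : E ⊆ D) (hE : IsCompact E) (hE' : IsOpen E) : gr.IsCompactOpenBisection E :=
  ⟨hE, hE', hD.injOn_src.mono hED, hD.exists_chart.imp fun _ he => ⟨he.1, hED.trans he.2⟩⟩

theorem IsAmple.exists_isCompactOpenBisection (ha : gr.IsAmple) {O : Set G} (hO : IsOpen O)
    {γ : G} (hγ : γ ∈ O) : ∃ D, gr.IsCompactOpenBisection D ∧ γ ∈ D ∧ D ⊆ O := by
  have ht := ha.toIsEtale.toIsTopological
  have := ha.toIsEtale.locallyCompactUnits
  obtain ⟨e, hγe, he⟩ := ha.toIsEtale.localHomeoRng γ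
  obtain ⟨e', hγe', he'⟩ := ha.toIsEtale.localHomeoRng (gr.inv γ)
  set W := O ∩ e.source ∩ gr.inv ⁻¹' e'.source
  have hWe : W ⊆ e.source := fun _ h => h.1.2
  have hW : IsOpen W := (hO.inter e.open_source).inter (e'.open_source.preimage ht.continuous_inv)
  -- `src = rng ∘ inv` is injective on `W` because `inv` maps `W` into the chart `e'`
  have hWsrc : InjOn gr.src W := fun a ha b hb hab => gr.inv_involutive.injective <|
    e'.injOn ha.2 hb.2 <| by rw [← he']; exact Subtype.ext (by simp only [rngTo, rng_inv, hab])
  obtain ⟨C, hC, hC', hγC, hCW⟩ := exists_isCompact_isClopen_subset ha.zeroDimUnits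
    (e.isOpen_image_of_subset_source hW hWe) (mem_image_of_mem e ⟨⟨hγ, hγe⟩, hγe'⟩)
  have hCe : C ⊆ e.target := hCW.trans (e.image_source_eq_target ▸ image_mono hWe)
  have hDW : e.symm '' C ⊆ W := by
    rintro _ ⟨_, hu, rfl⟩
    obtain ⟨w, hw, rfl⟩ := hCW hu
    rwa [e.left_inv (hWe hw)]
  refine ⟨e.symm '' C, ⟨hC.image_of_continuousOn (e.continuousOn_symm.mono hCe), ?_,
    hWsrc.mono hDW, e, he, hDW.trans hWe⟩, ⟨e γ, hγC, e.left_inv hγe⟩, hDW.trans fun _ h => h.1.1⟩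
  rw [e.symm_image_eq_source_inter_preimage hCe]
  exact e.isOpen_inter_preimage hC'.isOpen

end Topology

section Steinberg

variable [TopologicalSpace G] {gr} {R : Type*} [CommRing R] {f : G → R}

theorem InSteinberg.isOpen_support (hf : InSteinberg R f) : IsOpen (support f) :=
  (hf.1.isClopen_fiber 0).isClosed.isOpen_compl

theorem InSteinberg.isCompact_support (hf : InSteinberg R f) : IsCompact (support f) :=
  hf.2.isCompact.of_isClosed_subset (hf.1.isClopen_fiber 0).isOpen.isClosed_compl
    (subset_tsupport f)

theorem InSteinberg.indicator (hf : InSteinberg R f) {U : Set G} (hU : IsClopen U) :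
    InSteinberg R (U.indicator f) :=
  ⟨(LocallyConstant.indicator ⟨f, hf.1⟩ hU).isLocallyConstant,
    hf.2.mono (support_indicator.trans_subset inter_subset_right)⟩

theorem inSteinberg_indicator_const [T2Space G] {D : Set G} (hD : IsCompact D) (hD' : IsOpen D)
    (r : R) : InSteinberg R (D.indicator fun _ => r) :=
  ⟨(LocallyConstant.indicator (LocallyConstant.const G r) ⟨hD.isClosed, hD'⟩).isLocallyConstant,
    HasCompactSupport.intro hD fun _ h => indicator_of_notMem h _⟩

/-- The pieces `U ∩ V a`, `(U \ V a) ∩ V b`, … are peeled off one bisection at a time. -/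
theorem exists_indicator_eq_sum [T2Space G] (f : G → R) (t : Finset G) {V : G → Set G}
    (hV : ∀ a ∈ t, gr.IsCompactOpenBisection (V a)) (hfV : ∀ a ∈ t, ∀ γ ∈ V a, f γ = f a)
    {U : Set G} (hU : IsCompact U) (hU' : IsOpen U) (hUV : U ⊆ ⋃ a ∈ t, V a) :
    ∃ D : G → Set G, (∀ a ∈ t, gr.IsCompactOpenBisection (D a) ∧ D a ⊆ U) ∧
      U.indicator f = ∑ a ∈ t, (D a).indicator fun _ => f a := by
  classical
  induction t using Finset.induction_on generalizing U with
  | empty =>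
    obtain rfl : U = ∅ := subset_empty_iff.mp (by simpa using hUV)
    exact ⟨fun _ => ∅, by simp, (indicator_empty f).trans Finset.sum_empty.symm⟩
  | insert a t hat ih =>
    have hVa := hV a (Finset.mem_insert_self a t)
    have hcover : U \ V a ⊆ ⋃ b ∈ t, V b := by
      rintro γ ⟨hγU, hγa⟩
      obtain ⟨b, hb, hγb⟩ := mem_iUnion₂.mp (hUV hγU)
      obtain rfl | hb := Finset.mem_insert.mp hb
      · exact absurd hγb hγa
      · exact mem_iUnion₂.mpr ⟨b, hb, hγb⟩
    obtain ⟨D, hD, hsum⟩ := ih (fun b hb => hV b (Finset.mem_insert_of_mem hb))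
      (fun b hb => hfV b (Finset.mem_insert_of_mem hb)) (hU.diff hVa.isOpen)
      (hU'.sdiff hVa.isCompact.isClosed) hcover
    refine ⟨update D a (U ∩ V a), fun b hb => ?_, ?_⟩
    · rcases eq_or_ne b a with rfl | hba
      · rw [update_self]
        exact ⟨hVa.mono inter_subset_right (hU.inter_right hVa.isCompact.isClosed)
          (hU'.inter hVa.isOpen), inter_subset_left⟩
      · rw [update_of_ne hba]
        have hDb := hD b ((Finset.mem_insert.mp hb).resolve_left hba)
        exact ⟨hDb.1, hDb.2.trans sdiff_subset⟩
    · have hsplit : U.indicator f = (U ∩ V a).indicator f + (U \ V a).indicator f := by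
        conv_lhs => rw [← inter_union_sdiff U (V a)]
        exact indicator_union_of_disjoint disjoint_sdiff_inter.symm f
      rw [hsplit, hsum, Finset.sum_insert hat, update_self,
        indicator_congr fun γ hγ => hfV a (Finset.mem_insert_self a t) γ hγ.2]
      congr 1
      exact Finset.sum_congr rfl fun b hb => by rw [update_of_ne (ne_of_mem_of_not_mem hb hat)]

theorem InSteinberg.exists_eq_sum_indicator [T2Space G] (ha : gr.IsAmple)
    (hf : InSteinberg R f) : ∃ (t : Finset G) (D : G → Set G),
      (∀ a ∈ t, gr.IsCompactOpenBisection (D a) ∧ D a ⊆ support f) ∧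
      f = ∑ a ∈ t, (D a).indicator fun _ => f a := by
  have hloc : ∀ γ ∈ support f, ∃ V, gr.IsCompactOpenBisection V ∧ γ ∈ V ∧
      V ⊆ support f ∩ f ⁻¹' {f γ} := fun γ hγ =>
    ha.exists_isCompactOpenBisection (hf.isOpen_support.inter (hf.1 {f γ})) ⟨hγ, rfl⟩
  choose! V hV hγV hVf using hloc
  obtain ⟨t, hts, hcover⟩ := hf.isCompact_support.elim_nhds_subcover V
    fun γ hγ => (hV γ hγ).isOpen.mem_nhds (hγV γ hγ)
  obtain ⟨D, hD, hsum⟩ := exists_indicator_eq_sum f t (fun a ha => hV a (hts a ha))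
    (fun a ha γ hγ => (hVf a (hts a ha) hγ).2) hf.isCompact_support hf.isOpen_support hcover
  exact ⟨t, D, hD, by rwa [indicator_support] at hsum⟩

theorem IsTopological.hasCompactSupport_conv [T2Space G] (ht : gr.IsTopological) {x y : G → R}
    (hx : HasCompactSupport x) (hy : HasCompactSupport y) : HasCompactSupport (gr.conv R x y) :=
  HasCompactSupport.intro (ht.isCompact_mulSet hx hy) fun _ hγ => notMem_support.mp fun h =>
    hγ (image_mono (inter_subset_inter_left _ (prod_mono (subset_tsupport x)
      (subset_tsupport y))) (support_conv_subset x y h))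

theorem IsTopological.isLocallyConstant_conv_indicator [T2Space G] (ht : gr.IsTopological)
    {D : Set G} (hD : gr.IsCompactOpenBisection D) (r : R) {y : G → R}
    (hy : IsLocallyConstant y) : IsLocallyConstant (gr.conv R (D.indicator fun _ => r) y) := by
  obtain ⟨e, he, hDe⟩ := hD.exists_chart
  -- `e.symm (rngTo δ)` is the unique point of `D` with the same range as `δ`
  set O := gr.rngTo ⁻¹' (e '' D)
  have hσ : ∀ δ ∈ O, e.symm (gr.rngTo δ) ∈ D ∧ gr.rng (e.symm (gr.rngTo δ)) = gr.rng δ := by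
    rintro δ ⟨α, hα, hαδ⟩
    rw [← hαδ, e.left_inv (hDe hα)]
    exact ⟨hα, congrArg Subtype.val (he ▸ hαδ : gr.rngTo α = gr.rngTo δ)⟩
  have hO : IsOpen O :=
    (e.isOpen_image_of_subset_source hD.isOpen hDe).preimage ht.continuous_rngTo
  have hO' : IsClosed O :=
    (hD.isCompact.image (he ▸ ht.continuous_rngTo)).isClosed.preimage ht.continuous_rngTo
  have hOe : MapsTo gr.rngTo O e.target := fun _ hδ =>
    (e.image_source_eq_target ▸ image_mono hDe) hδ
  have hφ : ContinuousOn (fun δ => gr.mul (gr.inv (e.symm (gr.rngTo δ))) δ) O :=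
    ht.continuous_mul.comp ((ht.continuous_inv.comp_continuousOn (e.continuousOn_symm.comp
      ht.continuous_rngTo.continuousOn hOe)).prodMk continuousOn_id) fun δ hδ => by
        show gr.src (gr.inv (e.symm (gr.rngTo δ))) = gr.rng δ
        rw [gr.src_inv, (hσ δ hδ).2]
  have hon : ∀ δ ∈ O, gr.conv R (D.indicator fun _ => r) y δ =
      r * y (gr.mul (gr.inv (e.symm (gr.rngTo δ))) δ) := fun δ hδ =>
    conv_indicator_of_mem r y hD.isBisection.1 (hσ δ hδ).1 (hσ δ hδ).2
  have hoff : ∀ δ ∉ O, gr.conv R (D.indicator fun _ => r) y δ = 0 := fun δ hδ =>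
    conv_indicator_of_forall_ne r y fun α hα h => hδ ⟨α, hα, by rw [← he]; exact Subtype.ext h⟩
  rw [IsLocallyConstant.iff_eventually_eq]
  intro γ
  by_cases hγ : γ ∈ O
  · filter_upwards [hO.mem_nhds hγ,
      ((hφ.continuousAt (hO.mem_nhds hγ)).eventually (hy.eventually_eq _))] with δ hδ hδy
    rw [hon δ hδ, hon γ hγ, hδy]
  · filter_upwards [hO'.isOpen_compl.mem_nhds hγ] with δ hδ
    rw [hoff δ hδ, hoff γ hγ]

theorem InSteinberg.conv [T2Space G] (ha : gr.IsAmple) {x y : G → R} (hx : InSteinberg R x)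
    (hy : InSteinberg R y) : InSteinberg R (gr.conv R x y) := by
  have ht := ha.toIsEtale.toIsTopological
  refine ⟨?_, ht.hasCompactSupport_conv hx.2 hy.2⟩
  obtain ⟨t, D, hD, hx_eq⟩ := hx.exists_eq_sum_indicator ha
  rw [hx_eq, conv_finset_sum_left _ _ _ fun a ha =>
    finite_rng_preimage_inter_support_indicator (hD a ha).1.isBisection.1 _]
  exact Finset.sum_induction _ IsLocallyConstant (fun _ _ hf hg => hf.add hg)
    (IsLocallyConstant.const 0) fun a ha => ht.isLocallyConstant_conv_indicator (hD a ha).1 _ hy.1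

end Steinberg

section Grading

variable [TopologicalSpace G] (R : Type*) [CommRing R] {Γ : Type*}

def gradedComponent (c : G → Γ) (g : Γ) : Set (G → R) :=
  {f | InSteinberg R f ∧ support f ⊆ c ⁻¹' {g}}

variable {R} {gr} {c : G → Γ}

theorem indicator_preimage_mem_gradedComponent (hc : IsLocallyConstant c) {f : G → R}
    (hf : InSteinberg R f) (g : Γ) : (c ⁻¹' {g}).indicator f ∈ gradedComponent R c g :=
  ⟨hf.indicator (hc.isClopen_fiber g), support_indicator_subset⟩

theorem indicator_const_mem_gradedComponent [T2Space G] {D : Set G} (hD : IsCompact D)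
    (hD' : IsOpen D) {g : Γ} (hDg : D ⊆ c ⁻¹' {g}) (r : R) :
    D.indicator (fun _ => r) ∈ gradedComponent R c g :=
  ⟨inSteinberg_indicator_const hD hD' r, support_indicator_subset.trans hDg⟩

theorem IsAmple.conv_mem_gradedComponent [Group Γ] [T2Space G] (ha : gr.IsAmple)
    (hc : gr.IsCocycle c) {g h : Γ} {x y : G → R} (hx : x ∈ gradedComponent R c g) (hy : y ∈ gradedComponent R c h) :
    gr.conv R x y ∈ gradedComponent R c (g * h) :=
  ⟨hx.1.conv ha hy.1, (support_conv_subset x y).trans (hc.mulSet_subset hx.2 hy.2)⟩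

theorem IsAmple.span_gradedComponent [Group Γ] [T2Space G] (ha : gr.IsAmple)
    (hc : gr.IsCocycle c) (g : Γ) : Submodule.span R (gradedComponent R c g) = Submodule.span R
      {w | ∃ x ∈ gradedComponent R c g, ∃ y ∈ gradedComponent R c g⁻¹,
        ∃ z ∈ gradedComponent R c g, w = gr.conv R x (gr.conv R y z)} := by
  have ht := ha.toIsEtale.toIsTopological
  refine le_antisymm (Submodule.span_le.mpr fun f hf => ?_) (Submodule.span_mono ?_)
  · obtain ⟨t, D, hD, hf_eq⟩ := hf.1.exists_eq_sum_indicator ha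
    rw [SetLike.mem_coe, hf_eq]
    refine Submodule.sum_mem _ fun a ha' => Submodule.subset_span ?_
    obtain ⟨hDa, hDaf⟩ := hD a ha'
    have hDg : D a ⊆ c ⁻¹' {g} := hDaf.trans hf.2
    have hDg' : gr.inv '' D a ⊆ c ⁻¹' {g⁻¹} := by
      rintro _ ⟨δ, hδ, rfl⟩
      exact (hc.map_inv δ).trans (congrArg _ (hDg hδ))
    have hDinv : IsOpen (gr.inv '' D a) := by
      rw [gr.inv_involutive.image_eq_preimage_symm]
      exact hDa.isOpen.preimage ht.continuous_inv
    exact ⟨_, indicator_const_mem_gradedComponent hDa.isCompact hDa.isOpen hDg 1,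
      _, indicator_const_mem_gradedComponent (hDa.isCompact.image ht.continuous_inv) hDinv hDg' 1,
      _, indicator_const_mem_gradedComponent hDa.isCompact hDa.isOpen hDg (f a),
      (hDa.isBisection.conv_indicator_inv_conv (f a)).symm⟩
  · rintro _ ⟨x, hx, y, hy, z, hz, rfl⟩
    simpa only [mul_inv_cancel_left] using
      ha.conv_mem_gradedComponent hc hx (ha.conv_mem_gradedComponent hc hy hz)

end Grading

end DGroupoid

/-- A locally constant `Γ`-valued cocycle on an ample Hausdorff groupoid induces a
`Γ`-grading of the Steinberg algebra by the submodules `A_g = C_c(G_g, R)`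
(functions supported on `c⁻¹(g)`), and this grading is symmetric:
`A_g A_{g⁻¹} A_g = A_g` for all `g`. -/
theorem stmt18 {G R Γ : Type*} [TopologicalSpace G] [T2Space G] [CommRing R] [Group Γ]
    (gr : DGroupoid G) (ha : gr.IsAmple)
    (c : G → Γ) (hc : IsLocallyConstant c)
    (hcoc : ∀ a b, gr.src a = gr.rng b → c (gr.mul a b) = c a * c b)
    (A : Γ → Set (G → R))
    (hA : ∀ g, A g = {f | DGroupoid.InSteinberg R f ∧ ∀ γ, c γ ≠ g → f γ = 0}) :
    (∀ f : G → R, DGroupoid.InSteinberg R f → ∃ F : Finset Γ,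
      (∀ g, (c ⁻¹' {g}).indicator f ∈ A g) ∧
      ∀ γ, f γ = ∑ g ∈ F, (c ⁻¹' {g}).indicator f γ) ∧
    (∀ g h : Γ, ∀ x ∈ A g, ∀ y ∈ A h, gr.conv R x y ∈ A (g * h)) ∧
    (∀ g : Γ, Submodule.span R (A g) =
      Submodule.span R
        {w | ∃ x ∈ A g, ∃ y ∈ A g⁻¹, ∃ z ∈ A g, w = gr.conv R x (gr.conv R y z)}) := by
  obtain rfl : A = DGroupoid.gradedComponent R c := funext fun g => by
    rw [hA]
    simp only [DGroupoid.gradedComponent, support_subset_iff']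
    rfl
  refine ⟨fun f hf => ?_, fun g h x hx y hy => ha.conv_mem_gradedComponent hcoc hx hy,
    ha.span_gradedComponent hcoc⟩
  obtain ⟨F, hF⟩ := exists_finset_eq_sum_indicator_preimage hc hf.isCompact_support
  exact ⟨F, DGroupoid.indicator_preimage_mem_gradedComponent hc hf, hF⟩
end

section
/- Let G be an ample Hausdorff groupoid and U an open invariant subset of G⁽⁰⁾. Then A_K(G|_U) ∩ A_K(G⁽⁰⁾) = A_K(U); in particular, the open invariant set U can be recovered from the ideal A_K(G|_U), so the map U ↦ A_K(G|_U) from open invariant subsets of G⁽⁰⁾ to ideals of A_K(G) is injective. -/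
open TopologicalSpace

lemma DGroupoid.isOpen_unitSpace {G : Type*} [TopologicalSpace G] {gr : DGroupoid G}
    (he : gr.IsEtale) : IsOpen gr.unitSpace := by
  rw [isOpen_iff_forall_mem_open]
  intro x hx
  obtain ⟨e, hxe, hfe⟩ := he.localHomeoRng x
  have hx' : gr.src x = x := hx
  refine ⟨e.source ∩ gr.rng ⁻¹' e.source, ?_,
    e.open_source.inter (e.open_source.preimage he.toIsTopological.continuous_rng),
    hxe, ?_⟩
  · rintro γ ⟨h1, h2⟩
    have key : gr.rngTo γ = gr.rngTo (gr.rng γ) := by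
      apply Subtype.ext
      show gr.rng γ = gr.rng (gr.rng γ)
      rw [gr.rng_rng]
    rw [hfe] at key
    have hγ : γ = gr.rng γ := e.injOn h1 h2 key
    show gr.src γ = γ
    calc gr.src γ = gr.src (gr.rng γ) := by rw [← hγ]
      _ = gr.rng γ := gr.src_rng γ
      _ = γ := hγ.symm
  · have : gr.rng x = x := by
      calc gr.rng x = gr.rng (gr.src x) := by rw [hx']
        _ = gr.src x := gr.rng_src x
        _ = x := hx'
    show gr.rng x ∈ e.source
    rw [this]; exact hxe

lemma locallyConstant_indicator_aux {G K : Type*} [TopologicalSpace G] [Field K]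
    {W : Set G} (ho : IsOpen W) (hc : IsClosed W) :
    IsLocallyConstant (W.indicator fun _ => (1 : K)) := by
  rw [IsLocallyConstant.iff_exists_open]
  intro y
  by_cases hy : y ∈ W
  · exact ⟨W, ho, hy, fun z hz => by simp [Set.indicator_of_mem, hz, hy]⟩
  · exact ⟨Wᶜ, hc.isOpen_compl, hy,
      fun z hz => by rw [Set.mem_compl_iff] at hz; simp [Set.indicator_of_notMem, hz, hy]⟩

lemma stmt19_key {G K : Type*} [TopologicalSpace G] [T2Space G] [Field K]
    (gr : DGroupoid G) (ha : gr.IsAmple)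
    {U V : Set G} (hUo : IsOpen U) (hUs : U ⊆ gr.unitSpace)
    (h : {f : G → K | DGroupoid.InSteinberg K f ∧ ∀ γ, gr.src γ ∉ U → f γ = 0} ⊆
         {f : G → K | DGroupoid.InSteinberg K f ∧ ∀ γ, gr.src γ ∉ V → f γ = 0}) :
    U ⊆ V := by
  intro x hx
  haveI : LocallyCompactSpace gr.unitSpace := ha.toIsEtale.locallyCompactUnits
  have hx' : x ∈ gr.unitSpace := hUs hx
  have hUpre : IsOpen ((Subtype.val : gr.unitSpace → G) ⁻¹' U) :=
    hUo.preimage continuous_subtype_val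
  obtain ⟨Kc, hKn, hKsub, hKc⟩ := local_compact_nhds (x := (⟨x, hx'⟩ : gr.unitSpace))
    (hUpre.mem_nhds hx)
  obtain ⟨s, hs, hxs, hssub⟩ := ha.zeroDimUnits.exists_subset_of_mem_open
    (mem_interior_iff_mem_nhds.mpr hKn) isOpen_interior
  have hsclopen : IsClopen s := hs
  have hscomp : IsCompact s :=
    hKc.of_isClosed_subset hsclopen.isClosed (hssub.trans interior_subset)
  set W : Set G := Subtype.val '' s with hWdef
  have hWo : IsOpen W :=
    (DGroupoid.isOpen_unitSpace ha.toIsEtale).isOpenMap_subtype_val s hsclopen.isOpen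
  have hWcomp : IsCompact W := hscomp.image continuous_subtype_val
  have hWsubU : W ⊆ U := by
    rintro _ ⟨y, hy, rfl⟩
    exact hKsub (interior_subset (hssub hy))
  have hxW : x ∈ W := ⟨⟨x, hx'⟩, hxs, rfl⟩
  set f : G → K := W.indicator fun _ => (1 : K) with hfdef
  have hfmem : f ∈ {f : G → K | DGroupoid.InSteinberg K f ∧ ∀ γ, gr.src γ ∉ U → f γ = 0} := by
    refine ⟨⟨locallyConstant_indicator_aux hWo hWcomp.isClosed,
      HasCompactSupport.intro hWcomp fun y hy => Set.indicator_of_notMem hy _⟩, ?_⟩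
    intro γ hγ
    apply Set.indicator_of_notMem
    intro hγW
    apply hγ
    have hγu : gr.src γ = γ := hUs (hWsubU hγW)
    rw [hγu]
    exact hWsubU hγW
  obtain ⟨-, h2⟩ := h hfmem
  by_contra hxV
  have hxu : gr.src x = x := hx'
  have := h2 x (by rw [hxu]; exact hxV)
  rw [hfdef, Set.indicator_of_mem hxW] at this
  exact one_ne_zero this

/-- For an open invariant `U ⊆ G⁽⁰⁾`: `A_K(G|_U) ∩ A_K(G⁽⁰⁾) = A_K(U)`; consequently
the map `U ↦ A_K(G|_U)` from open invariant subsets of the unit space to ideals of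
the Steinberg algebra is injective. -/
theorem stmt19 {G K : Type*} [TopologicalSpace G] [T2Space G] [Field K]
    (gr : DGroupoid G) (ha : gr.IsAmple)
    (SU : Set G → Set (G → K))
    (hSU : ∀ U, SU U = {f | DGroupoid.InSteinberg K f ∧ ∀ γ, gr.src γ ∉ U → f γ = 0})
    (S0 : Set (G → K))
    (hS0 : S0 = {f | DGroupoid.InSteinberg K f ∧ ∀ γ ∉ gr.unitSpace, f γ = 0}) :
    (∀ U : Set G, IsOpen U → U ⊆ gr.unitSpace →
      (∀ γ, gr.rng γ ∈ U ↔ gr.src γ ∈ U) →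
      SU U ∩ S0 = {f | DGroupoid.InSteinberg K f ∧ ∀ x ∉ U, f x = 0}) ∧
    (∀ U V : Set G, IsOpen U → U ⊆ gr.unitSpace →
      (∀ γ, gr.rng γ ∈ U ↔ gr.src γ ∈ U) →
      IsOpen V → V ⊆ gr.unitSpace →
      (∀ γ, gr.rng γ ∈ V ↔ gr.src γ ∈ V) →
      SU U = SU V → U = V) := by
  constructor
  · intro U hUo hUs _hUinv
    rw [hSU U, hS0]
    ext f
    simp only [Set.mem_inter_iff, Set.mem_setOf_eq]
    constructor
    · rintro ⟨⟨hst, h1⟩, _, h2⟩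
      refine ⟨hst, fun y hy => ?_⟩
      by_cases hu : y ∈ gr.unitSpace
      · have hyu : gr.src y = y := hu
        exact h1 y (by rwa [hyu])
      · exact h2 y hu
    · rintro ⟨hst, h⟩
      have hvan : ∀ γ, gr.src γ ∉ U → f γ = 0 := by
        intro γ hγ
        apply h γ
        intro hγU
        apply hγ
        have : gr.src γ = γ := hUs hγU
        rwa [this]
      exact ⟨⟨hst, hvan⟩, hst, fun γ hγ => h γ fun hγU => hγ (hUs hγU)⟩
  · intro U V hUo hUs _ hVo hVs _ hEq
    rw [hSU U, hSU V] at hEq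
    exact subset_antisymm (stmt19_key gr ha hUo hUs hEq.subset)
      (stmt19_key gr ha hVo hVs hEq.symm.subset)
end
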